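/- arXiv:2202.05723 — 8 statements merged into one kernel-verified Lean document; each statement's English description precedes it below -/
import Mathlib

section
/- There exist constants C > 0 and l₀ > 0, depending only on U, such that for every l ≥ l₀ and all integers p, q ≥ 1: ∫₀^l ∫₀^l U(y − x)·(φ_p^l(x)²·φ_q^l(y)² − φ_p^l(x)·φ_q^l(x)·φ_p^l(y)·φ_q^l(y)) dx dy ≤ C·(p² + q²)/l³. -/
open MeasureTheory Real

/-- The `j`-th normalized Dirichlet eigenfunction on `[0,l]`. -/
noncomputable def dirichletEigenfunction (l : ℝ) (j : ℕ) (x : ℝ) : ℝ :=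
  Real.sqrt (2 / l) * Real.sin (π * j * x / l)

private lemma sin_lip (s t : ℝ) : |Real.sin s - Real.sin t| ≤ |s - t| := by
  rw [Real.sin_sub_sin]
  calc |2 * Real.sin ((s - t) / 2) * Real.cos ((s + t) / 2)|
      = 2 * |Real.sin ((s - t) / 2)| * |Real.cos ((s + t) / 2)| := by
        rw [abs_mul, abs_mul, abs_two]
    _ ≤ 2 * |(s - t) / 2| * 1 :=
        mul_le_mul (mul_le_mul_of_nonneg_left Real.abs_sin_le_abs (by norm_num))
          (Real.abs_cos_le_one _) (abs_nonneg _) (by positivity)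
    _ = |s - t| := by rw [abs_div, abs_two]; ring

private lemma sin_cross (A B x y : ℝ) (hA : 0 ≤ A) (hB : 0 ≤ B) :
    |Real.sin (A * x) * Real.sin (B * y) - Real.sin (A * y) * Real.sin (B * x)|
      ≤ (A + B) * |y - x| := by
  have hb : |Real.sin (B * y) - Real.sin (B * x)| ≤ B * |y - x| := by
    calc |Real.sin (B * y) - Real.sin (B * x)| ≤ |B * y - B * x| := sin_lip _ _
      _ = B * |y - x| := by
          rw [show B * y - B * x = B * (y - x) by ring, abs_mul, abs_of_nonneg hB]
  have ha : |Real.sin (A * x) - Real.sin (A * y)| ≤ A * |y - x| := by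
    calc |Real.sin (A * x) - Real.sin (A * y)| ≤ |A * x - A * y| := sin_lip _ _
      _ = A * |y - x| := by
          rw [show A * x - A * y = A * (x - y) by ring, abs_mul, abs_of_nonneg hA,
            abs_sub_comm]
  calc |Real.sin (A * x) * Real.sin (B * y) - Real.sin (A * y) * Real.sin (B * x)|
      = |Real.sin (A * x) * (Real.sin (B * y) - Real.sin (B * x))
          + Real.sin (B * x) * (Real.sin (A * x) - Real.sin (A * y))| := by ring_nf
    _ ≤ |Real.sin (A * x) * (Real.sin (B * y) - Real.sin (B * x))|
          + |Real.sin (B * x) * (Real.sin (A * x) - Real.sin (A * y))| := abs_add_le _ _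
    _ = |Real.sin (A * x)| * |Real.sin (B * y) - Real.sin (B * x)|
          + |Real.sin (B * x)| * |Real.sin (A * x) - Real.sin (A * y)| := by
        rw [abs_mul, abs_mul]
    _ ≤ 1 * (B * |y - x|) + 1 * (A * |y - x|) :=
        add_le_add (mul_le_mul (Real.abs_sin_le_one _) hb (abs_nonneg _) zero_le_one)
          (mul_le_mul (Real.abs_sin_le_one _) ha (abs_nonneg _) zero_le_one)
    _ = (A + B) * |y - x| := by ring

private lemma abs_quartic_bound {a b c d s : ℝ} (ha : |a| ≤ s) (hb : |b| ≤ s)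
    (hc : |c| ≤ s) (hd : |d| ≤ s) :
    |a ^ 2 * d ^ 2 - a * b * c * d| ≤ 2 * s ^ 4 := by
  have hs0 : 0 ≤ s := le_trans (abs_nonneg a) ha
  have h1 : |a ^ 2 * d ^ 2 - a * b * c * d| ≤ |a ^ 2 * d ^ 2| + |a * b * c * d| :=
    abs_sub _ _
  have ha2 : a ^ 2 ≤ s ^ 2 := by rw [← sq_abs]; exact pow_le_pow_left₀ (abs_nonneg a) ha 2
  have hd2 : d ^ 2 ≤ s ^ 2 := by rw [← sq_abs]; exact pow_le_pow_left₀ (abs_nonneg d) hd 2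
  have h2 : |a ^ 2 * d ^ 2| ≤ s ^ 4 := by
    rw [abs_of_nonneg (by positivity)]
    calc a ^ 2 * d ^ 2 ≤ s ^ 2 * s ^ 2 :=
        mul_le_mul ha2 hd2 (sq_nonneg d) (sq_nonneg s)
      _ = s ^ 4 := by ring
  have h3 : |a * b * c * d| ≤ s ^ 4 := by
    rw [abs_mul, abs_mul, abs_mul]
    calc |a| * |b| * |c| * |d| ≤ s * s * s * s :=
        mul_le_mul (mul_le_mul (mul_le_mul ha hb (abs_nonneg b) hs0) hc (abs_nonneg c)
          (by positivity)) hd (abs_nonneg d) (by positivity)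
      _ = s ^ 4 := by ring
  linarith

/-- Bound on the interaction of two particles in a single piece, in the antisymmetrized
product of two Dirichlet eigenfunctions: there are `C, l₀ > 0` depending only on `U` such
that for `l ≥ l₀` and `p, q ≥ 1`,
`∫∫ U(y-x) |φ_p ∧ φ_q|²(x,y) dx dy ≤ C (p² + q²) / l³`. -/
theorem interaction_bound_single_piece (U : ℝ → ℝ)
    (hU_nonneg : ∀ x, 0 ≤ U x) (hU_even : ∀ x, U (-x) = U x)
    (hU_bdd : ∃ C : ℝ, ∀ x, U x ≤ C) (hU_meas : Measurable U)
    (hU_supp : HasCompactSupport U) :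
    ∃ C : ℝ, 0 < C ∧ ∃ l₀ : ℝ, 0 < l₀ ∧
      ∀ l : ℝ, l₀ ≤ l → ∀ p q : ℕ, 1 ≤ p → 1 ≤ q →
        (∫ x in (0:ℝ)..l, ∫ y in (0:ℝ)..l,
          U (y - x) *
            ((dirichletEigenfunction l p x) ^ 2 * (dirichletEigenfunction l q y) ^ 2 -
              dirichletEigenfunction l p x * dirichletEigenfunction l q x *
                dirichletEigenfunction l p y * dirichletEigenfunction l q y))
          ≤ C * ((p : ℝ) ^ 2 + (q : ℝ) ^ 2) / l ^ 3 := by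
  classical
  obtain ⟨CU₀, hCU₀⟩ := hU_bdd
  set CU := max CU₀ 0 with hCUdef
  have hCU0 : 0 ≤ CU := le_max_right _ _
  have hCU : ∀ x, |U x| ≤ CU := fun x => by
    rw [abs_of_nonneg (hU_nonneg x)]
    exact le_trans (hCU₀ x) (le_max_left _ _)
  obtain ⟨R, hR0, hRsupp⟩ : ∃ R : ℝ, 0 < R ∧ ∀ x : ℝ, R ≤ ‖x‖ → U x = 0 :=
    hU_supp.exists_pos_le_norm
  -- integrability of `u ↦ U u * u ^ 2` on `ℝ`
  have hg_meas : Measurable fun u : ℝ => U u * u ^ 2 :=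
    hU_meas.mul (measurable_id.pow_const 2)
  have hgb : ∀ u : ℝ, ‖U u * u ^ 2‖ ≤ (Set.Icc (-R) R).indicator (fun _ => CU * R ^ 2) u := by
    intro u
    by_cases hu : |u| ≤ R
    · rw [Set.indicator_of_mem (by rw [Set.mem_Icc, ← abs_le]; exact hu)]
      rw [norm_mul, Real.norm_eq_abs, Real.norm_eq_abs, abs_pow, sq_abs]
      have hu2 : u ^ 2 ≤ R ^ 2 := by nlinarith [abs_nonneg u, neg_abs_le u, le_abs_self u]
      exact mul_le_mul (hCU u) hu2 (sq_nonneg u) hCU0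
    · push_neg at hu
      have hz : U u = 0 := hRsupp u (by rw [Real.norm_eq_abs]; exact hu.le)
      rw [hz]
      simpa using Set.indicator_nonneg
        (fun x _ => by positivity : ∀ x ∈ Set.Icc (-R) R, (0:ℝ) ≤ CU * R ^ 2) u
  have hg_int : Integrable fun u : ℝ => U u * u ^ 2 := by
    refine Integrable.mono'
      ((integrable_indicator_iff measurableSet_Icc).mpr
        (integrableOn_const measure_Icc_lt_top.ne))
      hg_meas.aestronglyMeasurable (Filter.Eventually.of_forall hgb)
  set M := ∫ u : ℝ, U u * u ^ 2 with hMdef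
  have hM0 : 0 ≤ M :=
    integral_nonneg fun u => mul_nonneg (hU_nonneg u) (sq_nonneg u)
  refine ⟨4 * π ^ 2 * (M + 1), by positivity, 1, one_pos, ?_⟩
  intro l hl p q hp hq
  have hl0 : (0:ℝ) < l := lt_of_lt_of_le one_pos hl
  have hlne : l ≠ 0 := ne_of_gt hl0
  set s : Set ℝ := Set.Ioc (0:ℝ) l with hsdef
  haveI hfin : IsFiniteMeasure (volume.restrict s) :=
    ⟨by rw [Measure.restrict_apply_univ]; exact measure_Ioc_lt_top⟩
  set μ : Measure ℝ := volume.restrict s with hμdef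
  -- eigenfunction bounds
  have hsq : Real.sqrt (2 / l) ^ 2 = 2 / l := Real.sq_sqrt (by positivity)
  have hφabs : ∀ (j : ℕ) (x : ℝ), |dirichletEigenfunction l j x| ≤ Real.sqrt (2 / l) := by
    intro j x
    unfold dirichletEigenfunction
    rw [abs_mul, abs_of_nonneg (Real.sqrt_nonneg _)]
    exact mul_le_of_le_one_right (Real.sqrt_nonneg _) (Real.abs_sin_le_one _)
  set F : ℝ → ℝ → ℝ := fun x y =>
    U (y - x) *
      (dirichletEigenfunction l p x ^ 2 * dirichletEigenfunction l q y ^ 2 -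
        dirichletEigenfunction l p x * dirichletEigenfunction l q x *
          dirichletEigenfunction l p y * dirichletEigenfunction l q y) with hF
  -- measurability and integrability of F on the product
  have hsub : Measurable fun z : ℝ × ℝ => z.2 - z.1 := measurable_snd.sub measurable_fst
  have hcont2 : Continuous fun z : ℝ × ℝ =>
      dirichletEigenfunction l p z.1 ^ 2 * dirichletEigenfunction l q z.2 ^ 2 -
        dirichletEigenfunction l p z.1 * dirichletEigenfunction l q z.1 *
          dirichletEigenfunction l p z.2 * dirichletEigenfunction l q z.2 := by
    unfold dirichletEigenfunction; fun_prop
  have hFmeas : Measurable fun z : ℝ × ℝ => F z.1 z.2 := by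
    simp only [hF]
    exact (hU_meas.comp hsub).mul hcont2.measurable
  have hFb : ∀ z : ℝ × ℝ, ‖F z.1 z.2‖ ≤ CU * (2 * Real.sqrt (2 / l) ^ 4) := by
    intro z
    simp only [hF]
    rw [norm_mul, Real.norm_eq_abs, Real.norm_eq_abs]
    exact mul_le_mul (hCU _)
      (abs_quartic_bound (hφabs p z.1) (hφabs q z.1) (hφabs p z.2) (hφabs q z.2))
      (abs_nonneg _) hCU0
  have hFi : Integrable (fun z : ℝ × ℝ => F z.1 z.2) (μ.prod μ) :=
    Integrable.mono' (integrable_const (CU * (2 * Real.sqrt (2 / l) ^ 4))) hFmeas.aestronglyMeasurable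
      (Filter.Eventually.of_forall hFb)
  have hFi' : Integrable (fun z : ℝ × ℝ => F z.2 z.1) (μ.prod μ) := hFi.swap
  -- integrability of the comparison function
  have hGb : ∀ z : ℝ × ℝ, ‖U (z.2 - z.1) * (z.2 - z.1) ^ 2‖ ≤ CU * R ^ 2 := by
    intro z
    rw [norm_mul, Real.norm_eq_abs, Real.norm_eq_abs, abs_pow, sq_abs]
    by_cases hu : |z.2 - z.1| ≤ R
    · exact mul_le_mul (hCU _)
        (by nlinarith [abs_nonneg (z.2 - z.1), neg_abs_le (z.2 - z.1), le_abs_self (z.2 - z.1)])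
        (sq_nonneg _) hCU0
    · push_neg at hu
      rw [hRsupp _ (by rw [Real.norm_eq_abs]; exact hu.le)]
      simp
      positivity
  have hGi : Integrable (fun z : ℝ × ℝ => U (z.2 - z.1) * (z.2 - z.1) ^ 2) (μ.prod μ) :=
    Integrable.mono' (integrable_const _)
      ((hU_meas.comp hsub).mul (hsub.pow_const 2)).aestronglyMeasurable
      (Filter.Eventually.of_forall hGb)
  -- the interaction constant
  set Kc : ℝ := (2 / l) ^ 2 * (π * p / l + π * q / l) ^ 2 with hKc
  have hKc0 : 0 ≤ Kc := by positivity
  -- pointwise cross bound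
  have hcross : ∀ x y : ℝ,
      (dirichletEigenfunction l p x * dirichletEigenfunction l q y -
        dirichletEigenfunction l p y * dirichletEigenfunction l q x) ^ 2
        ≤ Kc * (y - x) ^ 2 := by
    intro x y
    have hss : Real.sqrt (2 / l) * Real.sqrt (2 / l) = 2 / l :=
      Real.mul_self_sqrt (by positivity)
    have heq : dirichletEigenfunction l p x * dirichletEigenfunction l q y -
        dirichletEigenfunction l p y * dirichletEigenfunction l q x
        = (2 / l) *
          (Real.sin ((π * p / l) * x) * Real.sin ((π * q / l) * y) -
            Real.sin ((π * p / l) * y) * Real.sin ((π * q / l) * x)) := by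
      unfold dirichletEigenfunction
      rw [show π * (p:ℝ) * x / l = (π * p / l) * x by ring,
        show π * (q:ℝ) * y / l = (π * q / l) * y by ring,
        show π * (p:ℝ) * y / l = (π * p / l) * y by ring,
        show π * (q:ℝ) * x / l = (π * q / l) * x by ring]
      linear_combination (Real.sin ((π * p / l) * x) * Real.sin ((π * q / l) * y) -
        Real.sin ((π * p / l) * y) * Real.sin ((π * q / l) * x)) * hss
    rw [heq]
    have hb := sin_cross (π * p / l) (π * q / l) x y (by positivity) (by positivity)
    set S := Real.sin ((π * p / l) * x) * Real.sin ((π * q / l) * y) -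
      Real.sin ((π * p / l) * y) * Real.sin ((π * q / l) * x) with hS
    have hS2 : S ^ 2 ≤ (π * p / l + π * q / l) ^ 2 * (y - x) ^ 2 := by
      calc S ^ 2 = |S| ^ 2 := (sq_abs S).symm
        _ ≤ ((π * p / l + π * q / l) * |y - x|) ^ 2 :=
          pow_le_pow_left₀ (abs_nonneg S) hb 2
        _ = (π * p / l + π * q / l) ^ 2 * (y - x) ^ 2 := by
          rw [mul_pow, sq_abs]
    calc ((2 / l) * S) ^ 2 = (2 / l) ^ 2 * S ^ 2 := by ring
      _ ≤ (2 / l) ^ 2 * ((π * p / l + π * q / l) ^ 2 * (y - x) ^ 2) := by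
          exact mul_le_mul_of_nonneg_left hS2 (by positivity)
      _ = Kc * (y - x) ^ 2 := by rw [hKc]; ring
  -- rewrite the double interval integral as a product integral
  have hIeq : (∫ x in (0:ℝ)..l, ∫ y in (0:ℝ)..l, F x y)
      = ∫ z : ℝ × ℝ, F z.1 z.2 ∂(μ.prod μ) := by
    rw [intervalIntegral.integral_of_le hl0.le]
    simp_rw [intervalIntegral.integral_of_le hl0.le]
    exact integral_integral hFi
  -- swap symmetry
  have hswap : (∫ z : ℝ × ℝ, F z.2 z.1 ∂(μ.prod μ)) = ∫ z : ℝ × ℝ, F z.1 z.2 ∂(μ.prod μ) := by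
    have h := integral_prod_swap (μ := μ) (ν := μ) (fun z : ℝ × ℝ => F z.1 z.2)
    simpa using h
  -- the symmetrized integrand
  have hsym : ∀ z : ℝ × ℝ, F z.1 z.2 + F z.2 z.1
      = U (z.2 - z.1) *
        (dirichletEigenfunction l p z.1 * dirichletEigenfunction l q z.2 -
          dirichletEigenfunction l p z.2 * dirichletEigenfunction l q z.1) ^ 2 := by
    intro z
    have hUxy : U (z.1 - z.2) = U (z.2 - z.1) := by
      rw [show z.1 - z.2 = -(z.2 - z.1) by ring, hU_even]
    simp only [hF]
    rw [hUxy]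
    ring
  -- bound on the comparison integral
  have hinner : ∀ x : ℝ, (∫ y, U (y - x) * (y - x) ^ 2 ∂μ) ≤ M := by
    intro x
    have hix : Integrable fun y : ℝ => U (y - x) * (y - x) ^ 2 :=
      hg_int.comp_sub_right x
    calc (∫ y, U (y - x) * (y - x) ^ 2 ∂μ)
        ≤ ∫ y : ℝ, U (y - x) * (y - x) ^ 2 :=
          setIntegral_le_integral hix
            (Filter.Eventually.of_forall fun y => mul_nonneg (hU_nonneg _) (sq_nonneg _))
      _ = M := by
          rw [hMdef]
          exact integral_sub_right_eq_self (fun u : ℝ => U u * u ^ 2) x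
  have hGle : (∫ z : ℝ × ℝ, U (z.2 - z.1) * (z.2 - z.1) ^ 2 ∂(μ.prod μ)) ≤ l * M := by
    have heq : (∫ z : ℝ × ℝ, U (z.2 - z.1) * (z.2 - z.1) ^ 2 ∂(μ.prod μ))
        = ∫ x, (∫ y, U (y - x) * (y - x) ^ 2 ∂μ) ∂μ :=
      (integral_integral (μ := μ) (ν := μ) (f := fun x y => U (y - x) * (y - x) ^ 2)
        (by exact hGi)).symm
    have hconst : (∫ _, M ∂μ) = l * M := by
      rw [integral_const, hμdef, measureReal_restrict_apply_univ, hsdef, Real.volume_real_Ioc,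
        sub_zero, max_eq_left hl0.le, smul_eq_mul]
    have hmono : (∫ x, (∫ y, U (y - x) * (y - x) ^ 2 ∂μ) ∂μ) ≤ ∫ _, M ∂μ := by
      refine integral_mono_of_nonneg (Filter.Eventually.of_forall fun x => ?_)
        (integrable_const M) (Filter.Eventually.of_forall fun x => hinner x)
      exact integral_nonneg fun y => mul_nonneg (hU_nonneg _) (sq_nonneg _)
    rw [heq]
    exact hmono.trans (le_of_eq hconst)
  -- putting everything together
  have h2I : (∫ z : ℝ × ℝ, F z.1 z.2 ∂(μ.prod μ)) + (∫ z : ℝ × ℝ, F z.1 z.2 ∂(μ.prod μ))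
      ≤ Kc * (l * M) := by
    calc (∫ z : ℝ × ℝ, F z.1 z.2 ∂(μ.prod μ)) + (∫ z : ℝ × ℝ, F z.1 z.2 ∂(μ.prod μ))
        = (∫ z : ℝ × ℝ, F z.1 z.2 ∂(μ.prod μ)) + ∫ z : ℝ × ℝ, F z.2 z.1 ∂(μ.prod μ) := by rw [hswap]
      _ = ∫ z : ℝ × ℝ, (F z.1 z.2 + F z.2 z.1) ∂(μ.prod μ) := (integral_add hFi hFi').symm
      _ = ∫ z : ℝ × ℝ, U (z.2 - z.1) *
            (dirichletEigenfunction l p z.1 * dirichletEigenfunction l q z.2 -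
              dirichletEigenfunction l p z.2 * dirichletEigenfunction l q z.1) ^ 2 ∂(μ.prod μ) := by
          exact integral_congr_ae (Filter.Eventually.of_forall fun z => hsym z)
      _ ≤ ∫ z : ℝ × ℝ, Kc * (U (z.2 - z.1) * (z.2 - z.1) ^ 2) ∂(μ.prod μ) := by
          refine integral_mono_of_nonneg
            (Filter.Eventually.of_forall fun z => mul_nonneg (hU_nonneg _) (sq_nonneg _))
            (hGi.const_mul Kc) (Filter.Eventually.of_forall fun z => ?_)
          calc U (z.2 - z.1) * (_) ^ 2
              ≤ U (z.2 - z.1) * (Kc * (z.2 - z.1) ^ 2) :=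
                mul_le_mul_of_nonneg_left (hcross z.1 z.2) (hU_nonneg _)
            _ = Kc * (U (z.2 - z.1) * (z.2 - z.1) ^ 2) := by ring
      _ = Kc * ∫ z : ℝ × ℝ, U (z.2 - z.1) * (z.2 - z.1) ^ 2 ∂(μ.prod μ) :=
          integral_const_mul Kc _
      _ ≤ Kc * (l * M) := mul_le_mul_of_nonneg_left hGle hKc0
  -- final arithmetic
  have hfinal : Kc * (l * M)
      ≤ 2 * (4 * π ^ 2 * (M + 1) * ((p:ℝ) ^ 2 + (q:ℝ) ^ 2) / l ^ 3) := by
    have e1 : Kc * (l * M) = (4 * π ^ 2 * ((p:ℝ) + (q:ℝ)) ^ 2 * M) / l ^ 3 := by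
      rw [hKc]; field_simp; ring
    have e2 : 2 * (4 * π ^ 2 * (M + 1) * ((p:ℝ) ^ 2 + (q:ℝ) ^ 2) / l ^ 3)
        = (8 * π ^ 2 * (M + 1) * ((p:ℝ) ^ 2 + (q:ℝ) ^ 2)) / l ^ 3 := by ring
    rw [e1, e2]
    rw [div_le_div_iff_of_pos_right (by positivity : (0:ℝ) < l ^ 3)]
    nlinarith [mul_nonneg (mul_nonneg (sq_nonneg π) hM0) (sq_nonneg ((p:ℝ) - (q:ℝ))),
      mul_nonneg (sq_nonneg π) (sq_nonneg (p:ℝ)),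
      mul_nonneg (sq_nonneg π) (sq_nonneg (q:ℝ))]
  have hmain : (∫ x in (0:ℝ)..l, ∫ y in (0:ℝ)..l, F x y)
      ≤ 4 * π ^ 2 * (M + 1) * ((p:ℝ) ^ 2 + (q:ℝ) ^ 2) / l ^ 3 := by
    rw [hIeq]
    linarith [h2I, hfinal]
  exact hmain
end

section
/- There exist constants C > 0 and l₀ > 0, depending only on U, such that for all l, l' ≥ l₀, every d with 0 ≤ d ≤ M, and all integers p, q ≥ 1: ∫_{−l'}^{0} ∫_{d}^{d+l} U(x − y)·(2/l')·sin²(πp(y + l')/l')·(2/l)·sin²(πq(x − d)/l) dx dy ≤ C·p²·q²/(l³·l'³). -/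
open MeasureTheory Real

private lemma prod_bound_aux {u b c1 c2 s1 s2 t1 t2 : ℝ} (hu0 : 0 ≤ u) (hub : u ≤ b)
    (hc1 : 0 ≤ c1) (hc2 : 0 ≤ c2) (hs10 : 0 ≤ s1) (hs1 : s1 ≤ t1)
    (hs20 : 0 ≤ s2) (hs2 : s2 ≤ t2) :
    u * (c1 * s1) * (c2 * s2) ≤ b * (c1 * t1) * (c2 * t2) := by
  have hb : 0 ≤ b := hu0.trans hub
  have ht1 : 0 ≤ t1 := hs10.trans hs1
  exact mul_le_mul
    (mul_le_mul hub (mul_le_mul_of_nonneg_left hs1 hc1) (mul_nonneg hc1 hs10) hb)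
    (mul_le_mul_of_nonneg_left hs2 hc2) (mul_nonneg hc2 hs20)
    (mul_nonneg hb (mul_nonneg hc1 ht1))

/-- Bound on the interaction of two particles in two distinct pieces `[-l',0]` and
`[d,d+l]`, each in a Dirichlet eigenstate: there are `C, l₀ > 0` depending only on `U` such
that for `l, l' ≥ l₀`, `0 ≤ d ≤ M = diam (supp U)` and `p, q ≥ 1`,
`∫∫ U(x-y) φ_p²(y) φ_q²(x) dx dy ≤ C p² q² / (l³ l'³)`. -/
theorem interaction_bound_two_pieces (U : ℝ → ℝ)
    (hU_nonneg : ∀ x, 0 ≤ U x) (hU_even : ∀ x, U (-x) = U x)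
    (hU_bdd : ∃ C : ℝ, ∀ x, U x ≤ C) (hU_meas : Measurable U)
    (hU_supp : HasCompactSupport U) :
    ∃ C : ℝ, 0 < C ∧ ∃ l₀ : ℝ, 0 < l₀ ∧
      ∀ l l' : ℝ, l₀ ≤ l → l₀ ≤ l' →
        ∀ d : ℝ, 0 ≤ d → d ≤ Metric.diam (Function.support U) →
          ∀ p q : ℕ, 1 ≤ p → 1 ≤ q →
            (∫ y in (-l')..(0:ℝ), ∫ x in d..(d + l),
              U (x - y) * ((2 / l') * Real.sin (π * p * (y + l') / l') ^ 2) *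
                ((2 / l) * Real.sin (π * q * (x - d) / l) ^ 2))
              ≤ C * (p : ℝ) ^ 2 * (q : ℝ) ^ 2 / (l ^ 3 * l' ^ 3) := by
  obtain ⟨C0, hC0⟩ := hU_bdd
  set B : ℝ := max C0 1 with hBdef
  have hB1 : (1:ℝ) ≤ B := le_max_right _ _
  have hB0 : (0:ℝ) < B := lt_of_lt_of_le one_pos hB1
  have hUB : ∀ x, U x ≤ B := fun x => (hC0 x).trans (le_max_left _ _)
  set M : ℝ := Metric.diam (Function.support U) with hMdef
  have hM0 : 0 ≤ M := Metric.diam_nonneg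
  have hsupp : ∀ z : ℝ, U z ≠ 0 → |z| ≤ M := by
    intro z hz
    have hz1 : z ∈ Function.support U := hz
    have hz2 : -z ∈ Function.support U := by
      simp only [Function.mem_support]
      rw [hU_even]; exact hz
    have hbdd : Bornology.IsBounded (Function.support U) :=
      hU_supp.isBounded.subset (subset_tsupport U)
    have hd := Metric.dist_le_diam_of_mem hbdd hz1 hz2
    rw [Real.dist_eq] at hd
    have h2 : |z - -z| = 2 * |z| := by
      rw [sub_neg_eq_add, ← two_mul, abs_mul, abs_two]
    rw [h2] at hd
    have := abs_nonneg z
    linarith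
  have hCpos : (0:ℝ) < 4 * B * π ^ 4 * M ^ 6 + 1 := by
    have h1 : (0:ℝ) ≤ 4 * B * π ^ 4 * M ^ 6 :=
      mul_nonneg (mul_nonneg (mul_nonneg (by norm_num) hB0.le)
        (pow_nonneg Real.pi_pos.le 4)) (pow_nonneg hM0 6)
    linarith
  refine ⟨4 * B * π ^ 4 * M ^ 6 + 1, hCpos, 1, one_pos, ?_⟩
  intro l l' hl hl' d hd0 hdM p q hp hq
  have hl0 : (0:ℝ) < l := lt_of_lt_of_le one_pos hl
  have hl'0 : (0:ℝ) < l' := lt_of_lt_of_le one_pos hl'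
  set f : ℝ → ℝ → ℝ := fun x y =>
    U (x - y) * ((2 / l') * Real.sin (π * p * (y + l') / l') ^ 2) *
      ((2 / l) * Real.sin (π * q * (x - d) / l) ^ 2) with hfdef
  set K : ℝ := 4 * B * π ^ 4 * M ^ 4 * p ^ 2 * q ^ 2 / (l ^ 3 * l' ^ 3) with hKdef
  have hpq0 : (0:ℝ) ≤ (p:ℝ) ^ 2 * (q:ℝ) ^ 2 / (l ^ 3 * l' ^ 3) := by positivity
  have hK0 : 0 ≤ K := by
    rw [hKdef]
    have : (0:ℝ) ≤ 4 * B * π ^ 4 * M ^ 4 * p ^ 2 * q ^ 2 :=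
      mul_nonneg (mul_nonneg (mul_nonneg (mul_nonneg (mul_nonneg (by norm_num) hB0.le)
        (pow_nonneg Real.pi_pos.le 4)) (pow_nonneg hM0 4)) (by positivity)) (by positivity)
    positivity
  have hc1 : (0:ℝ) ≤ 2 / l' := by positivity
  have hc2 : (0:ℝ) ≤ 2 / l := by positivity
  -- nonnegativity of f
  have hf0 : ∀ x y, 0 ≤ f x y := fun x y =>
    mul_nonneg (mul_nonneg (hU_nonneg _) (mul_nonneg hc1 (sq_nonneg _)))
      (mul_nonneg hc2 (sq_nonneg _))
  -- uniform bound on f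
  have hfb : ∀ x y, ‖f x y‖ ≤ B * (2 / l') * (2 / l) := by
    intro x y
    rw [Real.norm_eq_abs, abs_of_nonneg (hf0 x y)]
    have := prod_bound_aux (hU_nonneg (x - y)) (hUB (x - y)) hc1 hc2
      (sq_nonneg (Real.sin (π * p * (y + l') / l')))
      (by
        have h1 : Real.sin (π * p * (y + l') / l') ^ 2 ≤ 1 := Real.sin_sq_le_one _
        exact h1)
      (sq_nonneg (Real.sin (π * q * (x - d) / l)))
      (Real.sin_sq_le_one _)
    calc f x y ≤ B * (2 / l' * 1) * (2 / l * 1) := this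
      _ = B * (2 / l') * (2 / l) := by ring
  -- key pointwise bound
  have key : ∀ y ∈ Set.Icc (-l') (0:ℝ), ∀ x ∈ Set.Ioc d (d + l),
      f x y ≤ Set.indicator (Set.Ioc d (d + M)) (fun _ => K) x := by
    intro y hy x hx
    by_cases hUz : U (x - y) = 0
    · have : f x y = 0 := by rw [hfdef]; simp [hUz]
      rw [this]
      exact Set.indicator_nonneg (fun _ _ => hK0) x
    · have habs : |x - y| ≤ M := hsupp _ hUz
      have hy2 : y ≤ 0 := hy.2
      have hxd : d < x := hx.1
      have hxy0 : 0 ≤ x - y := by linarith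
      rw [abs_of_nonneg hxy0] at habs
      have h1 : x - d ≤ M := by linarith
      have h2 : -y ≤ M := by linarith
      rw [Set.indicator_of_mem (show x ∈ Set.Ioc d (d + M) from ⟨hx.1, by linarith⟩)]
      -- bound for the y-sine
      have hsy : Real.sin (π * p * (y + l') / l') ^ 2 ≤ (π * p * M / l') ^ 2 := by
        have harg : π * p * (y + l') / l' = π * p * y / l' + p * π := by
          field_simp
        have hsin : Real.sin (π * p * (y + l') / l') =
            Real.sin (π * p * y / l') * Real.cos (p * π) := by
          rw [harg, Real.sin_add, Real.sin_nat_mul_pi, mul_zero, add_zero]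
        have hcos : Real.cos ((p:ℝ) * π) ^ 2 ≤ 1 := Real.cos_sq_le_one _
        have hsq : Real.sin (π * p * y / l') ^ 2 ≤ (π * p * y / l') ^ 2 :=
          Real.sin_sq_le_sq
        have hyy : (π * p * y / l') ^ 2 ≤ (π * p * M / l') ^ 2 := by
          rw [div_pow, div_pow]
          apply div_le_div_of_nonneg_right _ (by positivity)
          · have hpy : |π * p * y| ≤ |π * p * M| := by
              rw [abs_mul, abs_mul]
              have hp0 : (0:ℝ) ≤ (p:ℝ) := Nat.cast_nonneg p
              have : |y| ≤ M := by
                rw [abs_of_nonpos hy2]; exact h2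
              calc |π| * |(p:ℝ)| * |y| ≤ |π| * |(p:ℝ)| * M :=
                    mul_le_mul_of_nonneg_left this (by positivity)
                _ ≤ |π| * |(p:ℝ)| * |M| := by
                    rw [abs_of_nonneg hM0]
                _ = |π * (p:ℝ) * M| := by rw [abs_mul, abs_mul]
            calc (π * p * y) ^ 2 = |π * p * y| ^ 2 := (sq_abs _).symm
              _ ≤ |π * p * M| ^ 2 := by
                  apply pow_le_pow_left₀ (abs_nonneg _) hpy
              _ = (π * p * M) ^ 2 := sq_abs _
        calc Real.sin (π * p * (y + l') / l') ^ 2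
            = Real.sin (π * p * y / l') ^ 2 * Real.cos ((p:ℝ) * π) ^ 2 := by
              rw [hsin]; ring
          _ ≤ Real.sin (π * p * y / l') ^ 2 * 1 :=
              mul_le_mul_of_nonneg_left hcos (sq_nonneg _)
          _ = Real.sin (π * p * y / l') ^ 2 := mul_one _
          _ ≤ (π * p * y / l') ^ 2 := hsq
          _ ≤ (π * p * M / l') ^ 2 := hyy
      -- bound for the x-sine
      have hsx : Real.sin (π * q * (x - d) / l) ^ 2 ≤ (π * q * M / l) ^ 2 := by
        have hsq : Real.sin (π * q * (x - d) / l) ^ 2 ≤ (π * q * (x - d) / l) ^ 2 :=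
          Real.sin_sq_le_sq
        have hxx : (π * q * (x - d) / l) ^ 2 ≤ (π * q * M / l) ^ 2 := by
          rw [div_pow, div_pow]
          apply div_le_div_of_nonneg_right _ (by positivity)
          · have h0 : 0 ≤ π * q * (x - d) := by
              have : 0 ≤ x - d := by linarith
              positivity
            apply pow_le_pow_left₀ h0
            have : (0:ℝ) ≤ π * q := by positivity
            nlinarith
        exact hsq.trans hxx
      have hb := prod_bound_aux (hU_nonneg (x - y)) (hUB (x - y)) hc1 hc2
        (sq_nonneg _) hsy (sq_nonneg _) hsx
      calc f x y ≤ B * (2 / l' * (π * p * M / l') ^ 2) * (2 / l * (π * q * M / l) ^ 2) := hb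
        _ = K := by
            rw [hKdef]
            field_simp
            ring
  -- measurability of f in x for fixed y, and jointly
  have hfmeas : ∀ y, Measurable fun x => f x y := by
    intro y
    apply Measurable.mul
    apply Measurable.mul
    · exact hU_meas.comp (measurable_id.sub measurable_const)
    · exact measurable_const
    · apply Measurable.mul measurable_const
      apply Measurable.pow _ measurable_const
      exact Real.measurable_sin.comp (by fun_prop)
  have hjoint : StronglyMeasurable fun z : ℝ × ℝ => f z.2 z.1 := by
    apply Measurable.stronglyMeasurable
    apply Measurable.mul
    apply Measurable.mul
    · exact hU_meas.comp (measurable_snd.sub measurable_fst)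
    · apply Measurable.mul measurable_const
      apply Measurable.pow _ measurable_const
      exact Real.measurable_sin.comp (by fun_prop)
    · apply Measurable.mul measurable_const
      apply Measurable.pow _ measurable_const
      exact Real.measurable_sin.comp (by fun_prop)
  -- integrability of f(·, y) on Ioc d (d+l)
  have hint : ∀ y, IntegrableOn (fun x => f x y) (Set.Ioc d (d + l)) volume := by
    intro y
    apply Measure.integrableOn_of_bounded (M := B * (2 / l') * (2 / l))
      measure_Ioc_lt_top.ne (hfmeas y).aestronglyMeasurable
    exact Filter.Eventually.of_forall (fun x => hfb x y)
  have hindint : IntegrableOn (Set.indicator (Set.Ioc d (d + M)) (fun _ => K))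
      (Set.Ioc d (d + l)) volume := by
    apply Integrable.indicator _ measurableSet_Ioc
    exact integrableOn_const measure_Ioc_lt_top.ne
  -- inner integral bound
  have hKM0 : 0 ≤ K * M := mul_nonneg hK0 hM0
  have inner_le : ∀ y ∈ Set.Ioc (-l') (0:ℝ),
      (∫ x in d..(d + l), f x y) ≤
        Set.indicator (Set.Icc (-M) (0:ℝ)) (fun _ => K * M) y := by
    intro y hy
    have hy' : y ∈ Set.Icc (-l') (0:ℝ) := ⟨hy.1.le, hy.2⟩
    by_cases hyM : y ∈ Set.Icc (-M) (0:ℝ)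
    · rw [Set.indicator_of_mem hyM]
      rw [intervalIntegral.integral_of_le (by linarith)]
      calc (∫ x in Set.Ioc d (d + l), f x y)
          ≤ ∫ x in Set.Ioc d (d + l),
              Set.indicator (Set.Ioc d (d + M)) (fun _ => K) x := by
            apply setIntegral_mono_on (hint y) hindint measurableSet_Ioc
            exact fun x hx => key y hy' x hx
        _ = K * (volume (Set.Ioc d (d + M) ∩ Set.Ioc d (d + l))).toReal := by
            rw [integral_indicator measurableSet_Ioc]
            rw [Measure.restrict_restrict measurableSet_Ioc]
            rw [setIntegral_const]
            rw [smul_eq_mul, mul_comm]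
            rfl
        _ ≤ K * M := by
            apply mul_le_mul_of_nonneg_left _ hK0
            apply ENNReal.toReal_le_of_le_ofReal hM0
            calc volume (Set.Ioc d (d + M) ∩ Set.Ioc d (d + l))
                ≤ volume (Set.Ioc d (d + M)) := measure_mono Set.inter_subset_left
              _ = ENNReal.ofReal M := by rw [Real.volume_Ioc]; ring_nf
    · rw [Set.indicator_of_notMem hyM]
      have hyM' : y < -M := by
        rcases hy' with ⟨_, hy2⟩
        by_contra h
        push_neg at h
        exact hyM ⟨h, hy2⟩
      have : Set.EqOn (fun x => f x y) (fun _ => (0:ℝ)) (Set.uIcc d (d + l)) := by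
        intro x hx
        rw [Set.uIcc_of_le (by linarith)] at hx
        have hx1 : d ≤ x := hx.1
        have hUz : U (x - y) = 0 := by
          by_contra hne
          have := hsupp _ hne
          rw [abs_of_nonneg (by linarith)] at this
          linarith
        simp [hfdef, hUz]
      rw [intervalIntegral.integral_congr this]
      simp
  -- measurability and integrability of the inner integral as a function of y
  have hFmeas : StronglyMeasurable fun y => ∫ x in Set.Ioc d (d + l), f x y ∂volume := by
    have : SFinite (volume.restrict (Set.Ioc d (d + l))) := inferInstance
    exact hjoint.integral_prod_right'
  have hFeq : ∀ y, (∫ x in d..(d + l), f x y) = ∫ x in Set.Ioc d (d + l), f x y ∂volume := by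
    intro y
    rw [intervalIntegral.integral_of_le (by linarith)]
  have hFint : IntegrableOn (fun y => ∫ x in d..(d + l), f x y)
      (Set.Ioc (-l') (0:ℝ)) volume := by
    apply Measure.integrableOn_of_bounded (M := B * (2 / l') * (2 / l) * l)
      measure_Ioc_lt_top.ne
    · apply AEStronglyMeasurable.congr hFmeas.aestronglyMeasurable
      exact Filter.Eventually.of_forall (fun y => (hFeq y).symm)
    · apply Filter.Eventually.of_forall
      intro y
      have := intervalIntegral.norm_integral_le_of_norm_le_const
        (C := B * (2 / l') * (2 / l)) (f := fun x => f x y) (a := d) (b := d + l)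
        (fun x _ => hfb x y)
      calc ‖∫ x in d..(d + l), f x y‖ ≤ B * (2 / l') * (2 / l) * |d + l - d| := this
        _ = B * (2 / l') * (2 / l) * l := by
            rw [add_sub_cancel_left, abs_of_nonneg hl0.le]
  have houtind : IntegrableOn (Set.indicator (Set.Icc (-M) (0:ℝ)) (fun _ => K * M))
      (Set.Ioc (-l') (0:ℝ)) volume := by
    apply Integrable.indicator _ measurableSet_Icc
    exact integrableOn_const measure_Ioc_lt_top.ne
  -- outer integral bound
  have houter : (∫ y in (-l')..(0:ℝ), ∫ x in d..(d + l), f x y) ≤ K * M * M := by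
    rw [intervalIntegral.integral_of_le (by linarith)]
    calc (∫ y in Set.Ioc (-l') (0:ℝ), ∫ x in d..(d + l), f x y)
        ≤ ∫ y in Set.Ioc (-l') (0:ℝ),
            Set.indicator (Set.Icc (-M) (0:ℝ)) (fun _ => K * M) y := by
          apply setIntegral_mono_on hFint houtind measurableSet_Ioc
          exact inner_le
      _ = (K * M) * (volume (Set.Icc (-M) (0:ℝ) ∩ Set.Ioc (-l') (0:ℝ))).toReal := by
          rw [integral_indicator measurableSet_Icc]
          rw [Measure.restrict_restrict measurableSet_Icc]
          rw [setIntegral_const]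
          rw [smul_eq_mul, mul_comm]
          rfl
      _ ≤ K * M * M := by
          apply mul_le_mul_of_nonneg_left _ hKM0
          apply ENNReal.toReal_le_of_le_ofReal hM0
          calc volume (Set.Icc (-M) (0:ℝ) ∩ Set.Ioc (-l') (0:ℝ))
              ≤ volume (Set.Icc (-M) (0:ℝ)) := measure_mono Set.inter_subset_left
            _ = ENNReal.ofReal M := by rw [Real.volume_Icc]; ring_nf
  -- conclude
  have hfinal : K * M * M ≤ (4 * B * π ^ 4 * M ^ 6 + 1) * p ^ 2 * q ^ 2 / (l ^ 3 * l' ^ 3) := by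
    rw [hKdef, div_mul_eq_mul_div, div_mul_eq_mul_div]
    apply (div_le_div_iff_of_pos_right (show (0:ℝ) < l ^ 3 * l' ^ 3 by positivity)).2
    nlinarith [mul_nonneg (sq_nonneg ((p:ℝ))) (sq_nonneg ((q:ℝ)))]
  exact houter.trans hfinal
end

section
/- Let p ≥ 1 and let F₁,…,F_p : ℕ → [0,∞) satisfy F_i(0) = 0 and be strictly convex, meaning F_i(k+1) − F_i(k) > F_i(k) − F_i(k−1) for every k ≥ 1. Define G : ℕ → [0,∞) by G(r) = min{ Σ_{i=1}^p F_i(x_i) : (x₁,…,x_p) ∈ ℕ^p, Σ_{i=1}^p x_i = r }. Then G is convex: G(r+1) − G(r) ≥ G(r) − G(r−1) for every r ≥ 1. -/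
/-- Monotonicity of differences for a convex function on ℕ. -/
lemma diff_mono_of_convex (f : ℕ → ℝ)
    (hc : ∀ k : ℕ, 1 ≤ k → f k - f (k - 1) ≤ f (k + 1) - f k) :
    ∀ a b : ℕ, 1 ≤ a → a ≤ b → f a - f (a - 1) ≤ f b - f (b - 1) := by
  intro a b ha hab
  induction b with
  | zero => omega
  | succ n ih =>
    rcases Nat.lt_or_ge a (n + 1) with h | h
    · have h1 : a ≤ n := by omega
      have h2 : 1 ≤ n := by omega
      have := hc n h2
      have hn : (n + 1 : ℕ) - 1 = n := by omega
      rw [hn]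
      linarith [ih h1]
    · have : a = n + 1 := by omega
      subst this
      exact le_refl _

/-- If `F₁,…,F_p : ℕ → [0,∞)` vanish at `0` and are strictly convex, then the minimal
value `G(r)` of `∑ F_i(x_i)` over tuples with `∑ x_i = r` is a convex function of `r`. -/
theorem min_of_convex_is_convex (p : ℕ) (hp : 1 ≤ p) (F : Fin p → ℕ → ℝ)
    (hF0 : ∀ i, F i 0 = 0) (hF_nonneg : ∀ i k, 0 ≤ F i k)
    (hF_convex : ∀ i, ∀ k : ℕ, 1 ≤ k → F i k - F i (k - 1) < F i (k + 1) - F i k)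
    (G : ℕ → ℝ)
    (hG : ∀ r : ℕ,
      IsLeast {s : ℝ | ∃ x : Fin p → ℕ, (∑ i, x i) = r ∧ s = ∑ i, F i (x i)} (G r)) :
    ∀ r : ℕ, 1 ≤ r → G r - G (r - 1) ≤ G (r + 1) - G r := by
  intro r hr
  obtain ⟨x, hxsum, hxval⟩ := (hG (r + 1)).1
  obtain ⟨y, hysum, hyval⟩ := (hG (r - 1)).1
  -- find an index where x exceeds y
  have hex : ∃ i, y i < x i := by
    by_contra h
    push_neg at h
    have : (∑ i, x i) ≤ ∑ i, y i := Finset.sum_le_sum fun i _ => h i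
    omega
  obtain ⟨i, hi⟩ := hex
  have hxi : 1 ≤ x i := by omega
  set u : Fin p → ℕ := Function.update x i (x i - 1) with hu
  set v : Fin p → ℕ := Function.update y i (y i + 1) with hv
  have husum : (∑ j, u j) = r := by
    have h1 : (∑ j, u j) = (x i - 1) + ∑ j ∈ Finset.univ \ {i}, x j :=
      Finset.sum_update_of_mem (Finset.mem_univ i) x (x i - 1)
    have h2 : (∑ j, x j) = x i + ∑ j ∈ Finset.univ \ {i}, x j := by
      rw [Finset.sum_eq_sum_sdiff_singleton_add (Finset.mem_univ i)]
      ring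
    omega
  have hvsum : (∑ j, v j) = r := by
    have h1 : (∑ j, v j) = (y i + 1) + ∑ j ∈ Finset.univ \ {i}, y j :=
      Finset.sum_update_of_mem (Finset.mem_univ i) y (y i + 1)
    have h2 : (∑ j, y j) = y i + ∑ j ∈ Finset.univ \ {i}, y j := by
      rw [Finset.sum_eq_sum_sdiff_singleton_add (Finset.mem_univ i)]
      ring
    omega
  have hGu : G r ≤ ∑ j, F j (u j) := (hG r).2 ⟨u, husum, rfl⟩
  have hGv : G r ≤ ∑ j, F j (v j) := (hG r).2 ⟨v, hvsum, rfl⟩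
  -- sums with updates
  have hsu : (∑ j, F j (u j)) = F i (x i - 1) + ∑ j ∈ Finset.univ \ {i}, F j (x j) := by
    rw [Finset.sum_eq_sum_sdiff_singleton_add (Finset.mem_univ i) (fun j => F j (u j))]
    have h1 : u i = x i - 1 := Function.update_self i _ x
    have h2 : ∑ j ∈ Finset.univ \ {i}, F j (u j) = ∑ j ∈ Finset.univ \ {i}, F j (x j) := by
      refine Finset.sum_congr rfl fun j hj => ?_
      have : j ≠ i := by simpa using (Finset.mem_sdiff.mp hj).2
      rw [hu, Function.update_of_ne this]
    rw [h1, h2]; ring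
  have hsv : (∑ j, F j (v j)) = F i (y i + 1) + ∑ j ∈ Finset.univ \ {i}, F j (y j) := by
    rw [Finset.sum_eq_sum_sdiff_singleton_add (Finset.mem_univ i) (fun j => F j (v j))]
    have h1 : v i = y i + 1 := Function.update_self i _ y
    have h2 : ∑ j ∈ Finset.univ \ {i}, F j (v j) = ∑ j ∈ Finset.univ \ {i}, F j (y j) := by
      refine Finset.sum_congr rfl fun j hj => ?_
      have : j ≠ i := by simpa using (Finset.mem_sdiff.mp hj).2
      rw [hv, Function.update_of_ne this]
    rw [h1, h2]; ring
  have hsx : (∑ j, F j (x j)) = F i (x i) + ∑ j ∈ Finset.univ \ {i}, F j (x j) := by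
    rw [Finset.sum_eq_sum_sdiff_singleton_add (Finset.mem_univ i) (fun j => F j (x j))]; ring
  have hsy : (∑ j, F j (y j)) = F i (y i) + ∑ j ∈ Finset.univ \ {i}, F j (y j) := by
    rw [Finset.sum_eq_sum_sdiff_singleton_add (Finset.mem_univ i) (fun j => F j (y j))]; ring
  -- the key inequality
  have hkey : F i (y i + 1) - F i (y i) ≤ F i (x i) - F i (x i - 1) := by
    have := diff_mono_of_convex (F i)
      (fun k hk => le_of_lt (hF_convex i k hk)) (y i + 1) (x i) (by omega) (by omega)
    simpa using this
  linarith
end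

section
/- Let p ≥ 1 and let F₁,…,F_p : ℕ → [0,∞) satisfy F_i(0) = 0 and be strictly convex, meaning F_i(k+1) − F_i(k) > F_i(k) − F_i(k−1) for every k ≥ 1. Define G(r) = min{ Σ_{i=1}^p F_i(x_i) : (x₁,…,x_p) ∈ ℕ^p, Σ_{i=1}^p x_i = r }. Then for every r ≥ 1, G(r) equals the sum of the r smallest elements, counted with multiplicity, of the family Γ = (F_i(k+1) − F_i(k))_{1≤i≤p, k∈ℕ}: precisely, there exists a finite set S ⊆ {1,…,p} × ℕ with |S| = r such that G(r) = Σ_{(i,k)∈S} (F_i(k+1) − F_i(k)), and F_j(m+1) − F_j(m) ≥ F_i(k+1) − F_i(k) for every (j,m) ∉ S and every (i,k) ∈ S. -/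
/-- If `F₁,…,F_p : ℕ → [0,∞)` vanish at `0` and are strictly convex, then the minimal
value `G(r)` of `∑ F_i(x_i)` over tuples with `∑ x_i = r` equals the sum of the `r`
smallest elements (with multiplicity) of the family of increments `F_i(k+1) − F_i(k)`. -/
theorem min_is_sum_of_smallest_increments (p : ℕ) (hp : 1 ≤ p) (F : Fin p → ℕ → ℝ)
    (hF0 : ∀ i, F i 0 = 0) (hF_nonneg : ∀ i k, 0 ≤ F i k)
    (hF_convex : ∀ i, ∀ k : ℕ, 1 ≤ k → F i k - F i (k - 1) < F i (k + 1) - F i k)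
    (G : ℕ → ℝ)
    (hG : ∀ r : ℕ,
      IsLeast {s : ℝ | ∃ x : Fin p → ℕ, (∑ i, x i) = r ∧ s = ∑ i, F i (x i)} (G r)) :
    ∀ r : ℕ, 1 ≤ r →
      ∃ S : Finset (Fin p × ℕ), S.card = r ∧
        G r = ∑ ik ∈ S, (F ik.1 (ik.2 + 1) - F ik.1 ik.2) ∧
        ∀ jm : Fin p × ℕ, jm ∉ S → ∀ ik ∈ S,
          F ik.1 (ik.2 + 1) - F ik.1 ik.2 ≤ F jm.1 (jm.2 + 1) - F jm.1 jm.2 := by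
  classical
  intro r hr
  obtain ⟨⟨x, hxsum, hGx⟩, hlb⟩ := hG r
  -- monotonicity of increments
  have hDmono : ∀ i : Fin p, Monotone (fun k => F i (k + 1) - F i k) := by
    intro i
    apply monotone_nat_of_le_succ
    intro k
    have h := hF_convex i (k + 1) (by omega)
    simp only [Nat.add_sub_cancel] at h
    exact le_of_lt h
  -- key exchange inequality
  have key : ∀ (j : Fin p) (m : ℕ), x j ≤ m → ∀ (i : Fin p) (k : ℕ), k < x i →
      F i (k + 1) - F i k ≤ F j (m + 1) - F j m := by
    intro j m hjm i k hik
    by_cases hij : i = j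
    · subst hij
      exact hDmono i (by omega : k ≤ m)
    · have hxi : 1 ≤ x i := by omega
      have hstep : F i (x i) - F i (x i - 1) ≤ F j (x j + 1) - F j (x j) := by
        set y : Fin p → ℕ :=
          Function.update (Function.update x i (x i - 1)) j (x j + 1) with hy
        have hij' : i ∈ Finset.univ \ ({j} : Finset (Fin p)) := by simp [hij]
        have hysum : (∑ i', y i') = r := by
          have h1 : (∑ i', y i') = (x j + 1) +
              ∑ i' ∈ Finset.univ \ {j}, Function.update x i (x i - 1) i' := by
            rw [hy, Finset.sum_update_of_mem (Finset.mem_univ j)]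
          have h2 : (∑ i' ∈ Finset.univ \ {j}, Function.update x i (x i - 1) i')
              = (x i - 1) + ∑ i' ∈ (Finset.univ \ {j}) \ {i}, x i' := by
            rw [Finset.sum_update_of_mem hij']
          have h3 : (∑ i', x i') = x j + ∑ i' ∈ Finset.univ \ {j}, x i' :=
            Finset.sum_eq_add_sum_sdiff_singleton_of_mem (Finset.mem_univ j) x
          have h4 : (∑ i' ∈ Finset.univ \ {j}, x i')
              = x i + ∑ i' ∈ (Finset.univ \ {j}) \ {i}, x i' :=
            Finset.sum_eq_add_sum_sdiff_singleton_of_mem hij' x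
          omega
        have hGle : G r ≤ ∑ i', F i' (y i') := hlb ⟨y, hysum, rfl⟩
        have hle : (∑ i', F i' (x i')) ≤ ∑ i', F i' (y i') := by
          rw [← hGx]; exact hGle
        have hyi : y i = x i - 1 := by
          simp [hy, Function.update_of_ne hij]
        have hyj : y j = x j + 1 := by simp [hy]
        have hsub : ∑ i', (F i' (y i') - F i' (x i'))
            = ∑ i' ∈ ({i, j} : Finset (Fin p)), (F i' (y i') - F i' (x i')) := by
          refine (Finset.sum_subset (Finset.subset_univ _) ?_).symm
          intro i' _ hi'
          simp only [Finset.mem_insert, Finset.mem_singleton, not_or] at hi'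
          have : y i' = x i' := by
            simp [hy, Function.update_of_ne hi'.2, Function.update_of_ne hi'.1]
          rw [this]; ring
        have hpair : ∑ i' ∈ ({i, j} : Finset (Fin p)), (F i' (y i') - F i' (x i'))
            = (F i (y i) - F i (x i)) + (F j (y j) - F j (x j)) :=
          Finset.sum_pair hij
        have hdist : ∑ i', (F i' (y i') - F i' (x i'))
            = (∑ i', F i' (y i')) - ∑ i', F i' (x i') := Finset.sum_sub_distrib _ _
        rw [hsub, hpair, hyi, hyj] at hdist
        linarith
      have h1 : F i (k + 1) - F i k ≤ F i (x i - 1 + 1) - F i (x i - 1) :=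
        hDmono i (by omega : k ≤ x i - 1)
      have h2 : F j (x j + 1) - F j (x j) ≤ F j (m + 1) - F j m :=
        hDmono j hjm
      have hx1 : x i - 1 + 1 = x i := by omega
      rw [hx1] at h1
      linarith
  -- the set S
  set S : Finset (Fin p × ℕ) := Finset.univ.biUnion
    (fun i => (Finset.range (x i)).map
      ⟨fun k => (i, k), fun a b h => by simpa using h⟩) with hS
  have hmem : ∀ ik : Fin p × ℕ, ik ∈ S ↔ ik.2 < x ik.1 := by
    rintro ⟨a, b⟩
    simp only [hS, Finset.mem_biUnion, Finset.mem_univ, true_and, Finset.mem_map,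
      Finset.mem_range, Function.Embedding.coeFn_mk, Prod.mk.injEq]
    constructor
    · rintro ⟨i, k, hk, rfl, rfl⟩; exact hk
    · intro h; exact ⟨a, b, h, rfl⟩
  have hdisj : ∀ i ∈ (Finset.univ : Finset (Fin p)), ∀ j ∈ Finset.univ, i ≠ j →
      Disjoint ((Finset.range (x i)).map
        ⟨fun k => (i, k), fun a b h => by simpa using h⟩)
        ((Finset.range (x j)).map
        ⟨fun k => (j, k), fun a b h => by simpa using h⟩) := by
    intro i _ j _ hij
    rw [Finset.disjoint_left]
    rintro ⟨a, b⟩ h1 h2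
    simp only [Finset.mem_map, Finset.mem_range, Function.Embedding.coeFn_mk,
      Prod.mk.injEq] at h1 h2
    obtain ⟨k, _, rfl, rfl⟩ := h1
    obtain ⟨k', _, rfl, _⟩ := h2
    exact hij rfl
  refine ⟨S, ?_, ?_, ?_⟩
  · rw [hS, Finset.card_biUnion hdisj]
    simp [hxsum]
  · rw [hS, Finset.sum_biUnion]
    · rw [hGx]
      refine Finset.sum_congr rfl fun i _ => ?_
      rw [Finset.sum_map]
      show F i (x i) = ∑ k ∈ Finset.range (x i), (F i (k + 1) - F i k)
      rw [Finset.sum_range_sub (fun k => F i k) (x i), hF0 i, sub_zero]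
    · intro a ha b hb hab
      exact hdisj a (Finset.mem_univ a) b (Finset.mem_univ b) hab
  · intro jm hjm ik hik
    rw [hmem] at hjm hik
    exact key jm.1 jm.2 (by omega) ik.1 ik.2 hik
end

section
/- Let p ≥ 1 and let F₁,…,F_p : ℕ → [0,∞) satisfy F_i(0) = 0 and be strictly convex, meaning F_i(k+1) − F_i(k) > F_i(k) − F_i(k−1) for every k ≥ 1. Define G(r) = min{ Σ_{i=1}^p F_i(x_i) : (x₁,…,x_p) ∈ ℕ^p, Σ_{i=1}^p x_i = r }. Then there exists a sequence (x^r)_{r∈ℕ} of p-tuples in ℕ^p such that x⁰ = (0,…,0), and for every r: Σ_{i=1}^p x^r_i = r, Σ_{i=1}^p F_i(x^r_i) = G(r), and x^{r+1} is obtained from x^r by increasing exactly one coordinate by 1 (there is a unique index j with x^{r+1}_j = x^r_j + 1 and x^{r+1}_i = x^r_i for all i ≠ j). -/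
/-- If `F₁,…,F_p : ℕ → [0,∞)` vanish at `0` and are strictly convex, then there is a
sequence of minimizers `x^r` of `∑ F_i(x_i)` subject to `∑ x_i = r`, starting from the zero
tuple, such that each `x^{r+1}` is obtained from `x^r` by increasing exactly one coordinate
by `1`. -/
theorem minimizers_increase_one_coordinate (p : ℕ) (hp : 1 ≤ p) (F : Fin p → ℕ → ℝ)
    (hF0 : ∀ i, F i 0 = 0) (hF_nonneg : ∀ i k, 0 ≤ F i k)
    (hF_convex : ∀ i, ∀ k : ℕ, 1 ≤ k → F i k - F i (k - 1) < F i (k + 1) - F i k)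
    (G : ℕ → ℝ)
    (hG : ∀ r : ℕ,
      IsLeast {s : ℝ | ∃ x : Fin p → ℕ, (∑ i, x i) = r ∧ s = ∑ i, F i (x i)} (G r)) :
    ∃ x : ℕ → Fin p → ℕ, x 0 = 0 ∧
      ∀ r : ℕ, (∑ i, x r i) = r ∧ (∑ i, F i (x r i)) = G r ∧
        ∃! j : Fin p, x (r + 1) j = x r j + 1 ∧ ∀ i : Fin p, i ≠ j → x (r + 1) i = x r i := by
  classical
  haveI : NeZero p := ⟨by omega⟩
  -- monotonicity of marginal differences
  have Dmono : ∀ i : Fin p, Monotone (fun k => F i (k + 1) - F i k) := by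
    intro i
    apply StrictMono.monotone
    apply strictMono_nat_of_lt_succ
    intro k
    have := hF_convex i (k + 1) (by omega)
    simpa using this
  -- sums over updates
  have hufF : ∀ (v : Fin p → ℕ) (j : Fin p) (b : ℕ),
      (∑ i, F i (Function.update v j b i))
        = F j b + ∑ i ∈ Finset.univ.erase j, F i (v i) := by
    intro v j b
    rw [← Finset.add_sum_erase Finset.univ (fun i => F i (Function.update v j b i))
      (Finset.mem_univ j), Function.update_self]
    congr 1
    exact Finset.sum_congr rfl fun i hi => by
      rw [Function.update_of_ne (Finset.ne_of_mem_erase hi)]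
  have hufN : ∀ (v : Fin p → ℕ) (j : Fin p) (b : ℕ),
      (∑ i, Function.update v j b i) = b + ∑ i ∈ Finset.univ.erase j, v i := by
    intro v j b
    rw [← Finset.add_sum_erase Finset.univ (Function.update v j b)
      (Finset.mem_univ j), Function.update_self]
    congr 1
    exact Finset.sum_congr rfl fun i hi => by
      rw [Function.update_of_ne (Finset.ne_of_mem_erase hi)]
  -- choice of argmin coordinate
  have hmin : ∀ v : Fin p → ℕ, ∃ j : Fin p,
      ∀ i : Fin p, F j (v j + 1) - F j (v j) ≤ F i (v i + 1) - F i (v i) := by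
    intro v
    obtain ⟨j, _, hj⟩ := Finset.exists_min_image Finset.univ
      (fun i => F i (v i + 1) - F i (v i)) Finset.univ_nonempty
    exact ⟨j, fun i => hj i (Finset.mem_univ i)⟩
  choose jm hjm using hmin
  set x : ℕ → Fin p → ℕ := fun r =>
    Nat.rec (fun _ => 0) (fun _ v => Function.update v (jm v) (v (jm v) + 1)) r with hxdef
  have hxs : ∀ r, x (r + 1) = Function.update (x r) (jm (x r)) (x r (jm (x r)) + 1) :=
    fun r => rfl
  have hlb : ∀ r (v : Fin p → ℕ), (∑ i, v i) = r → G r ≤ ∑ i, F i (v i) :=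
    fun r v hv => (hG r).2 ⟨v, hv, rfl⟩
  have key : ∀ r, (∑ i, x r i) = r ∧ (∑ i, F i (x r i)) = G r := by
    intro r
    induction r with
    | zero =>
      constructor
      · simp [hxdef]
      · obtain ⟨y, hy1, hy2⟩ := (hG 0).1
        have hy0 : ∀ i, y i = 0 := fun i =>
          Finset.sum_eq_zero_iff.mp hy1 i (Finset.mem_univ i)
        have : (∑ i, F i (x 0 i)) = ∑ i, F i (y i) :=
          Finset.sum_congr rfl fun i _ => by simp [hxdef, hy0 i]
        rw [this, ← hy2]
    | succ r ih =>
      obtain ⟨hs, hv⟩ := ih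
      have hserase : (∑ i, x r i)
          = x r (jm (x r)) + ∑ i ∈ Finset.univ.erase (jm (x r)), x r i :=
        (Finset.add_sum_erase Finset.univ (x r) (Finset.mem_univ (jm (x r)))).symm
      have hsum_upd : (∑ i, x (r + 1) i) = r + 1 := by
        rw [hxs r, hufN]
        omega
      have hFsum_upd : (∑ i, F i (x (r + 1) i))
          = (∑ i, F i (x r i))
            + (F (jm (x r)) (x r (jm (x r)) + 1) - F (jm (x r)) (x r (jm (x r)))) := by
        rw [hxs r, hufF,
          ← Finset.add_sum_erase Finset.univ (fun i => F i (x r i))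
            (Finset.mem_univ (jm (x r)))]
        ring
      refine ⟨hsum_upd, ?_⟩
      -- optimality
      obtain ⟨y, hy1, hy2⟩ := (hG (r + 1)).1
      have hex : ∃ i, x r i < y i := by
        by_contra h
        push_neg at h
        have := Finset.sum_le_sum (fun i (_ : i ∈ Finset.univ) => h i)
        omega
      obtain ⟨i, hi⟩ := hex
      have hyerase : (∑ k, y k) = y i + ∑ k ∈ Finset.univ.erase i, y k :=
        (Finset.add_sum_erase Finset.univ y (Finset.mem_univ i)).symm
      set z := Function.update y i (y i - 1) with hzdef
      have hyi : y i - 1 + 1 = y i := by omega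
      have hz1 : (∑ k, z k) = r := by
        rw [hzdef, hufN]
        omega
      have hzF : (∑ k, F k (y k)) = (∑ k, F k (z k)) + (F i (y i) - F i (y i - 1)) := by
        rw [hzdef, hufF,
          ← Finset.add_sum_erase Finset.univ (fun k => F k (y k)) (Finset.mem_univ i)]
        ring
      have hmargin : F (jm (x r)) (x r (jm (x r)) + 1) - F (jm (x r)) (x r (jm (x r)))
          ≤ F i (y i) - F i (y i - 1) := by
        have h1 := hjm (x r) i
        have h2 : F i (x r i + 1) - F i (x r i) ≤ F i (y i - 1 + 1) - F i (y i - 1) :=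
          Dmono i (by omega)
        rw [hyi] at h2
        linarith
      have hGle : G (r + 1) ≤ ∑ k, F k (x (r + 1) k) := hlb (r + 1) _ hsum_upd
      have hGrz : G r ≤ ∑ k, F k (z k) := hlb r z hz1
      have : (∑ k, F k (x (r + 1) k)) ≤ G (r + 1) := by
        rw [hFsum_upd, hv]
        calc G r + (F (jm (x r)) (x r (jm (x r)) + 1) - F (jm (x r)) (x r (jm (x r))))
            ≤ (∑ k, F k (z k)) + (F i (y i) - F i (y i - 1)) := by linarith
          _ = ∑ k, F k (y k) := hzF.symm
          _ = G (r + 1) := hy2.symm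
      linarith
  refine ⟨x, rfl, fun r => ⟨(key r).1, (key r).2, ?_⟩⟩
  refine ⟨jm (x r), ⟨?_, ?_⟩, ?_⟩
  · rw [hxs r]; simp
  · intro i hij; rw [hxs r]; exact Function.update_of_ne hij _ _
  · rintro j' ⟨h1, h2⟩
    by_contra hne
    have := h2 (jm (x r)) (fun h => hne h.symm)
    rw [hxs r] at this
    simp at this
end

section
/- Let J be a finite nonempty index set, and for each j ∈ J let p_j ≥ 1 be an integer (the capacity of j) and F_j : {0,1,…,p_j} → ℝ a function with F_j(0) = 0 whose increments f_j(k) = F_j(k) − F_j(k−1) are strictly increasing in k on {1,…,p_j}. Then for every integer r with 0 ≤ r ≤ Σ_{j∈J} p_j, the minimum of Σ_{j∈J} F_j(κ_j) over all families (κ_j)_{j∈J} of integers with 0 ≤ κ_j ≤ p_j and Σ_{j∈J} κ_j = r equals the sum of the r smallest elements, counted with multiplicity, of the finite family (f_j(k))_{j∈J, 1≤k≤p_j}: precisely, there is a set S ⊆ {(j,k) : j ∈ J, 1 ≤ k ≤ p_j} with |S| = r such that the minimum equals Σ_{(j,k)∈S} f_j(k) and f_{j'}(k') ≥ f_j(k)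 for every (j',k') ∉ S and every (j,k) ∈ S. -/
open Finset

private lemma select_smallest {α : Type*} [DecidableEq α] (f : α → ℝ) :
    ∀ (r : ℕ) (T : Finset α), r ≤ T.card →
      ∃ S : Finset α, S ⊆ T ∧ S.card = r ∧
        ∀ x ∈ T, x ∉ S → ∀ y ∈ S, f y ≤ f x := by
  intro r
  induction r with
  | zero => intro T _; exact ⟨∅, empty_subset _, rfl, by simp⟩
  | succ n ih =>
    intro T hr
    obtain ⟨S, hST, hcard, hmin⟩ := ih T (le_of_lt (Nat.lt_of_succ_le hr))
    have hne : (T \ S).Nonempty := by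
      rw [← card_pos, card_sdiff_of_subset hST]; omega
    obtain ⟨x, hx, hxmin⟩ := exists_min_image (T \ S) f hne
    have hxT : x ∈ T := (mem_sdiff.1 hx).1
    have hxS : x ∉ S := (mem_sdiff.1 hx).2
    refine ⟨insert x S, insert_subset hxT hST,
      by rw [card_insert_of_notMem hxS, hcard], ?_⟩
    intro z hzT hz y hy
    have hzS : z ∉ S := fun h => hz (mem_insert_of_mem h)
    rcases mem_insert.1 hy with rfl | hyS
    · exact hxmin z (mem_sdiff.2 ⟨hzT, hzS⟩)
    · exact hmin z hzT hzS y hyS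

private lemma exchange_sum_le {α : Type*} [DecidableEq α] (f : α → ℝ) (T S D : Finset α)
    (hST : S ⊆ T) (hDT : D ⊆ T) (hcard : D.card = S.card)
    (hmin : ∀ x ∈ T, x ∉ S → ∀ y ∈ S, f y ≤ f x) :
    ∑ y ∈ S, f y ≤ ∑ x ∈ D, f x := by
  have hc : (S \ D).card = (D \ S).card := by
    have h1 := card_sdiff_add_card_inter S D
    have h2 := card_sdiff_add_card_inter D S
    rw [inter_comm] at h2
    omega
  have key : ∑ y ∈ S \ D, f y ≤ ∑ x ∈ D \ S, f x := by
    rcases (D \ S).eq_empty_or_nonempty with h | h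
    · have h0 : S \ D = ∅ := card_eq_zero.1 (by rw [hc, h, card_empty])
      rw [h0, h]
    · obtain ⟨x, hx, hxmin⟩ := exists_min_image (D \ S) f h
      have h1 : ∑ y ∈ S \ D, f y ≤ (S \ D).card • f x := by
        apply sum_le_card_nsmul
        intro y hy
        exact hmin x (hDT (mem_sdiff.1 hx).1) (mem_sdiff.1 hx).2 y (mem_sdiff.1 hy).1
      have h2 : (D \ S).card • f x ≤ ∑ x ∈ D \ S, f x :=
        card_nsmul_le_sum _ _ _ hxmin
      calc ∑ y ∈ S \ D, f y ≤ (S \ D).card • f x := h1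
        _ = (D \ S).card • f x := by rw [hc]
        _ ≤ _ := h2
  have hS := sum_inter_add_sum_sdiff S D f
  have hD := sum_inter_add_sum_sdiff D S f
  rw [inter_comm] at hD
  linarith

private lemma downward_closed_eq_Icc (A : Finset ℕ)
    (h1 : ∀ k ∈ A, 1 ≤ k) (h2 : ∀ k ∈ A, 2 ≤ k → k - 1 ∈ A) :
    A = Finset.Icc 1 A.card := by
  have key : ∀ d m, m ∈ A → 1 ≤ m - d → m - d ∈ A := by
    intro d
    induction d with
    | zero => intro m hm _; simpa using hm
    | succ n ih =>
      intro m hm hle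
      have hmem : m - n ∈ A := ih m hm (by omega)
      have := h2 _ hmem (by omega)
      have heq : m - n - 1 = m - (n + 1) := by omega
      rwa [heq] at this
  rcases A.eq_empty_or_nonempty with rfl | hA
  · simp
  · have hM := A.max'_mem hA
    have hM1 : 1 ≤ A.max' hA := h1 _ hM
    have hAeq : A = Finset.Icc 1 (A.max' hA) := by
      apply Finset.Subset.antisymm
      · intro k hk
        rw [mem_Icc]; exact ⟨h1 k hk, le_max' A k hk⟩
      · intro k hk
        rw [mem_Icc] at hk
        have hkk : A.max' hA - (A.max' hA - k) = k := by omega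
        rw [← hkk]
        exact key _ _ hM (by omega)
    have hcard : A.card = A.max' hA := by
      conv_lhs => rw [hAeq]
      rw [Nat.card_Icc]; omega
    rw [hcard]; exact hAeq

private lemma telescope (F : ℕ → ℝ) (hF0 : F 0 = 0) (n : ℕ) :
    F n = ∑ k ∈ Finset.Icc 1 n, (F k - F (k - 1)) := by
  induction n with
  | zero => simp [hF0]
  | succ n ih =>
    rw [Finset.sum_Icc_succ_top (by omega : 1 ≤ n + 1), ← ih,
      show n + 1 - 1 = n from rfl]
    ring

/-- Distribution of `r` particles among chains with capacities: if each chain `j` has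
capacity `p_j ≥ 1` and energy function `F_j` with `F_j(0) = 0` whose increments
`f_j(k) = F_j(k) − F_j(k−1)` are strictly increasing on `{1,…,p_j}`, then for every
`r ≤ ∑ p_j` the minimum of `∑ F_j(κ_j)` over `0 ≤ κ_j ≤ p_j` with `∑ κ_j = r` equals the
sum of the `r` smallest increments, counted with multiplicity. -/
theorem min_energy_is_sum_of_smallest_levels (J : Type) [Fintype J] [Nonempty J]
    (p : J → ℕ) (hp : ∀ j, 1 ≤ p j)
    (F : J → ℕ → ℝ) (hF0 : ∀ j, F j 0 = 0)
    (hmono : ∀ j, ∀ k : ℕ, 1 ≤ k → k + 1 ≤ p j →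
      F j k - F j (k - 1) < F j (k + 1) - F j k) :
    ∀ r : ℕ, r ≤ ∑ j, p j →
      ∃ m : ℝ,
        IsLeast {s : ℝ | ∃ κ : J → ℕ, (∀ j, κ j ≤ p j) ∧ (∑ j, κ j) = r ∧
          s = ∑ j, F j (κ j)} m ∧
        ∃ S : Finset (J × ℕ),
          (∀ jk ∈ S, 1 ≤ jk.2 ∧ jk.2 ≤ p jk.1) ∧ S.card = r ∧
          m = ∑ jk ∈ S, (F jk.1 jk.2 - F jk.1 (jk.2 - 1)) ∧
          ∀ jk' : J × ℕ, 1 ≤ jk'.2 → jk'.2 ≤ p jk'.1 → jk' ∉ S →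
            ∀ jk ∈ S,
              F jk.1 jk.2 - F jk.1 (jk.2 - 1) ≤ F jk'.1 jk'.2 - F jk'.1 (jk'.2 - 1) := by
  classical
  intro r hr
  set f : J × ℕ → ℝ := fun jk => F jk.1 jk.2 - F jk.1 (jk.2 - 1) with hf
  set D : (J → ℕ) → Finset (J × ℕ) := fun κ =>
    Finset.univ.biUnion (fun j => (Finset.Icc 1 (κ j)).image (fun k => (j, k))) with hD
  have memD : ∀ κ (jk : J × ℕ), jk ∈ D κ ↔ 1 ≤ jk.2 ∧ jk.2 ≤ κ jk.1 := by
    intro κ jk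
    simp only [hD, mem_biUnion, mem_image, mem_univ, true_and, mem_Icc]
    constructor
    · rintro ⟨j, k, ⟨ha, hb⟩, rfl⟩; exact ⟨ha, hb⟩
    · rintro ⟨ha, hb⟩; exact ⟨jk.1, jk.2, ⟨ha, hb⟩, rfl⟩
  have hinj : ∀ j : J, Function.Injective (fun k : ℕ => (j, k)) := by
    intro j a b h; simpa using h
  have hdisj : ∀ κ : J → ℕ, ∀ j ∈ (Finset.univ : Finset J), ∀ j' ∈ (Finset.univ : Finset J),
      j ≠ j' → Disjoint ((Finset.Icc 1 (κ j)).image (fun k => (j, k)))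
        ((Finset.Icc 1 (κ j')).image (fun k => (j', k))) := by
    intro κ j _ j' _ hjj'
    rw [Finset.disjoint_left]
    rintro x hx hx'
    simp only [mem_image] at hx hx'
    obtain ⟨k, -, rfl⟩ := hx
    obtain ⟨k', -, h⟩ := hx'
    exact hjj' (Prod.ext_iff.1 h).1.symm
  have cardD : ∀ κ, (D κ).card = ∑ j, κ j := by
    intro κ
    rw [hD, card_biUnion (hdisj κ)]
    refine Finset.sum_congr rfl fun j _ => ?_
    rw [card_image_of_injective _ (hinj j), Nat.card_Icc]
    omega
  have sumD : ∀ κ, ∑ jk ∈ D κ, f jk = ∑ j, F j (κ j) := by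
    intro κ
    rw [hD, sum_biUnion]
    · refine Finset.sum_congr rfl fun j _ => ?_
      rw [Finset.sum_image (fun a _ b _ h => hinj j h)]
      exact (telescope (F j) (hF0 j) (κ j)).symm
    · intro j _ j' _ hjj'
      exact hdisj κ j (mem_univ j) j' (mem_univ j') hjj'
  have DsubT : ∀ κ, (∀ j, κ j ≤ p j) → D κ ⊆ D p := by
    intro κ hκ jk hjk
    rw [memD] at hjk ⊢
    exact ⟨hjk.1, le_trans hjk.2 (hκ jk.1)⟩
  have hrT : r ≤ (D p).card := by rw [cardD]; exact hr
  obtain ⟨S, hST, hScard, hSmin⟩ := select_smallest f r (D p) hrT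
  -- downward closedness of S within each chain
  set A : J → Finset ℕ := fun j => (Finset.Icc 1 (p j)).filter (fun k => (j, k) ∈ S)
    with hA
  have hAIcc : ∀ j, A j = Finset.Icc 1 (A j).card := by
    intro j
    apply downward_closed_eq_Icc
    · intro k hk
      simp only [hA, mem_filter, mem_Icc] at hk
      exact hk.1.1
    · intro k hk h2k
      simp only [hA, mem_filter, mem_Icc] at hk ⊢
      obtain ⟨⟨hk1, hk2⟩, hkS⟩ := hk
      refine ⟨⟨by omega, by omega⟩, ?_⟩
      by_contra hnot
      have hmemT : ((j, k - 1) : J × ℕ) ∈ D p := by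
        rw [memD]
        exact ⟨by show 1 ≤ k - 1; omega, by show k - 1 ≤ p j; omega⟩
      have hle := hSmin (j, k - 1) hmemT hnot (j, k) hkS
      have hlt := hmono j (k - 1) (by omega) (by omega)
      rw [show k - 1 + 1 = k from by omega] at hlt
      simp only [hf] at hle
      linarith
  set κ : J → ℕ := fun j => (A j).card with hκ
  have hκp : ∀ j, κ j ≤ p j := by
    intro j
    have : (A j).card ≤ (Finset.Icc 1 (p j)).card := card_le_card (filter_subset _ _)
    rw [Nat.card_Icc] at this
    simp only [hκ]
    omega
  have hSD : S = D κ := by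
    ext jk
    rw [memD]
    constructor
    · intro hjk
      have hT := hST hjk
      rw [memD] at hT
      have hmemA : jk.2 ∈ A jk.1 := by
        simp only [hA, mem_filter, mem_Icc]
        exact ⟨⟨hT.1, hT.2⟩, by rwa [Prod.mk.eta]⟩
      rw [hAIcc jk.1, mem_Icc] at hmemA
      exact hmemA
    · intro hjk
      have hmemA : jk.2 ∈ A jk.1 := by
        rw [hAIcc jk.1, mem_Icc]; exact hjk
      simp only [hA, mem_filter] at hmemA
      exact hmemA.2
  have hκsum : ∑ j, κ j = r := by
    rw [← cardD κ, ← hSD, hScard]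
  refine ⟨∑ jk ∈ S, f jk, ⟨⟨κ, hκp, hκsum, ?_⟩, ?_⟩, S, ?_, hScard, rfl, ?_⟩
  · rw [← sumD κ, ← hSD]
  · rintro s ⟨κ', hκ'p, hκ'sum, rfl⟩
    rw [← sumD κ']
    exact exchange_sum_le f (D p) S (D κ') hST (DsubT κ' hκ'p)
      (by rw [cardD, hκ'sum, hScard]) hSmin
  · intro jk hjk
    have := hST hjk
    rw [memD] at this
    exact this
  · intro jk' h1 h2 hnot jk hjk
    exact hSmin jk' ((memD p jk').2 ⟨h1, h2⟩) hnot jk hjk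
end

section
/- Let U : ℝ → ℝ be nonnegative, bounded, measurable and compactly supported, and let d ≥ 0. Then there exists a constant C > 0 such that for every smooth compactly supported h : ℝ² → ℝ: ∫₀^∞ ∫₀^∞ U(u + v + d) · ( ∫_{ℝ²} (sin(xu)·sin(yv)/(x² + y²)) · h(x,y) dx dy )² du dv ≤ C·‖h‖²_{L²(ℝ²)}. -/
open MeasureTheory Real

lemma key_poly {R x y m s : ℝ} (hm0 : 0 ≤ m) (hm2 : m ^ 2 ≤ x ^ 2 + y ^ 2) (hR0 : 0 ≤ R)
    (hs0 : 0 ≤ s) (hs1 : s ≤ 1) (hs2 : s ≤ x ^ 2 * y ^ 2 * R ^ 4) :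
    s * (1 + m) ^ 4 ≤ (4 * R ^ 4 + 16) * (x ^ 2 + y ^ 2) ^ 2 := by
  rcases le_total m 1 with hm1 | hm1
  · have h12 : (1 + m) ^ 2 ≤ 4 := by nlinarith
    have hB16 : (1 + m) ^ 4 ≤ 16 := by nlinarith [sq_nonneg (1 + m)]
    have h4 : 4 * (x ^ 2 * y ^ 2) ≤ (x ^ 2 + y ^ 2) ^ 2 := by nlinarith [sq_nonneg (x ^ 2 - y ^ 2)]
    calc s * (1 + m) ^ 4 ≤ (x ^ 2 * y ^ 2 * R ^ 4) * 16 :=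
          mul_le_mul hs2 hB16 (by positivity) (by positivity)
      _ ≤ (4 * R ^ 4 + 16) * (x ^ 2 + y ^ 2) ^ 2 := by
          nlinarith [mul_le_mul_of_nonneg_left h4 (by positivity : (0:ℝ) ≤ R ^ 4),
            sq_nonneg (x ^ 2 + y ^ 2)]
  · have h2m : (1 + m) ^ 2 ≤ 4 * m ^ 2 := by nlinarith
    have hm4 : (m ^ 2) ^ 2 ≤ (x ^ 2 + y ^ 2) ^ 2 := by
      have h0 : (0:ℝ) ≤ m ^ 2 := sq_nonneg m
      nlinarith
    have hB : (1 + m) ^ 4 ≤ 16 * (x ^ 2 + y ^ 2) ^ 2 := by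
      nlinarith [sq_nonneg (1 + m), sq_nonneg m]
    calc s * (1 + m) ^ 4 ≤ 1 * (16 * (x ^ 2 + y ^ 2) ^ 2) :=
          mul_le_mul hs1 hB (by positivity) (by norm_num)
      _ ≤ (4 * R ^ 4 + 16) * (x ^ 2 + y ^ 2) ^ 2 := by
          nlinarith [sq_nonneg (x ^ 2 + y ^ 2), pow_nonneg hR0 4]

lemma ker_sq_le' {R u v : ℝ} (hu0 : 0 ≤ u) (huR : u ≤ R) (hv0 : 0 ≤ v) (hvR : v ≤ R)
    (q : ℝ × ℝ) :
    (Real.sin (q.1 * u) * Real.sin (q.2 * v) / (q.1 ^ 2 + q.2 ^ 2)) ^ 2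
      ≤ (4 * R ^ 4 + 16) * ((1 + ‖q‖) ^ 4)⁻¹ := by
  obtain ⟨x, y⟩ := q
  simp only
  set m : ℝ := ‖(x, y)‖ with hmdef
  have hm0 : 0 ≤ m := norm_nonneg _
  have hmB : (0:ℝ) < (1 + m) ^ 4 := by positivity
  have hR0 : 0 ≤ R := le_trans hu0 huR
  have hm2 : m ^ 2 ≤ x ^ 2 + y ^ 2 := by
    have hm : m = max ‖x‖ ‖y‖ := rfl
    rcases max_choice ‖x‖ ‖y‖ with h | h <;>
      rw [hm, h, Real.norm_eq_abs] <;>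
      nlinarith [sq_abs x, sq_abs y, sq_nonneg x, sq_nonneg y]
  clear_value m
  clear hmdef
  rcases eq_or_lt_of_le (by positivity : (0:ℝ) ≤ x ^ 2 + y ^ 2) with hD | hD
  · rw [← hD, div_zero]
    norm_num
    positivity
  · rw [div_pow, ← div_eq_mul_inv, div_le_div_iff₀ (by positivity) hmB]
    have hs1 : (sin (x * u) * sin (y * v)) ^ 2 ≤ 1 := by
      have h1 := sin_sq_le_one (x * u)
      have h2 := sin_sq_le_one (y * v)
      nlinarith [sq_nonneg (sin (x * u)), sq_nonneg (sin (y * v))]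
    have ha : sin (x * u) ^ 2 ≤ x ^ 2 * u ^ 2 := by
      have := sin_sq_le_sq (x := x * u); nlinarith [this]
    have hb : sin (y * v) ^ 2 ≤ y ^ 2 * v ^ 2 := by
      have := sin_sq_le_sq (x := y * v); nlinarith [this]
    have hu2 : u ^ 2 ≤ R ^ 2 := by nlinarith
    have hv2 : v ^ 2 ≤ R ^ 2 := by nlinarith
    have h3 : u ^ 2 * v ^ 2 ≤ R ^ 4 := by nlinarith [sq_nonneg v, sq_nonneg R]
    have hs2 : (sin (x * u) * sin (y * v)) ^ 2 ≤ x ^ 2 * y ^ 2 * R ^ 4 := by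
      have h1 : sin (x * u) ^ 2 * sin (y * v) ^ 2 ≤ (x ^ 2 * u ^ 2) * (y ^ 2 * v ^ 2) :=
        mul_le_mul ha hb (sq_nonneg _) (by positivity)
      have h2 : (x ^ 2 * u ^ 2) * (y ^ 2 * v ^ 2) ≤ x ^ 2 * y ^ 2 * R ^ 4 := by
        nlinarith [mul_le_mul_of_nonneg_left h3 (mul_nonneg (sq_nonneg x) (sq_nonneg y))]
      calc (sin (x * u) * sin (y * v)) ^ 2 = sin (x * u) ^ 2 * sin (y * v) ^ 2 := by ring
        _ ≤ _ := le_trans h1 h2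
    exact key_poly hm0 hm2 hR0 (sq_nonneg _) hs1 hs2

lemma W_integrable (R : ℝ) :
    Integrable (fun q : ℝ × ℝ => (4 * R ^ 4 + 16) * ((1 + ‖q‖) ^ 4)⁻¹) := by
  have h : Integrable (fun q : ℝ × ℝ => (1 + ‖q‖) ^ (-(4:ℝ))) :=
    integrable_one_add_norm (by norm_num [Module.finrank_prod, Module.finrank_self])
  refine (h.const_mul (4 * R ^ 4 + 16)).congr (Filter.Eventually.of_forall fun q => ?_)
  simp only
  rw [Real.rpow_neg (by positivity), show ((4:ℝ)) = ((4:ℕ):ℝ) by norm_num, Real.rpow_natCast]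

lemma cs_step {R u v : ℝ} (hu : u ∈ Set.Ioc (0:ℝ) R) (hv : v ∈ Set.Ioc (0:ℝ) R)
    {h : ℝ × ℝ → ℝ} (hc : Continuous h) (hcs : HasCompactSupport h) :
    (∫ q : ℝ × ℝ, Real.sin (q.1 * u) * Real.sin (q.2 * v) / (q.1 ^ 2 + q.2 ^ 2) * h q) ^ 2
      ≤ (∫ q : ℝ × ℝ, (4 * R ^ 4 + 16) * ((1 + ‖q‖) ^ 4)⁻¹) * ∫ q : ℝ × ℝ, (h q) ^ 2 := by
  set K : ℝ × ℝ → ℝ := fun q => Real.sin (q.1 * u) * Real.sin (q.2 * v) / (q.1 ^ 2 + q.2 ^ 2)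
    with hKdef
  have hKm : Measurable K := by
    apply Measurable.div
    · exact (Real.measurable_sin.comp (measurable_fst.mul_const u)).mul
        (Real.measurable_sin.comp (measurable_snd.mul_const v))
    · exact (measurable_fst.pow_const 2).add (measurable_snd.pow_const 2)
  have hbd : ∀ q, K q ^ 2 ≤ (4 * R ^ 4 + 16) * ((1 + ‖q‖) ^ 4)⁻¹ := fun q =>
    ker_sq_le' hu.1.le hu.2 hv.1.le hv.2 q
  have hWint := W_integrable R
  have hK2 : Integrable (fun q => K q ^ 2) := by
    refine hWint.mono' ((hKm.pow_const 2).aestronglyMeasurable)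
      (Filter.Eventually.of_forall fun q => ?_)
    rw [Real.norm_eq_abs, abs_of_nonneg (sq_nonneg _)]
    exact hbd q
  have hKmem : MemLp K 2 (volume : Measure (ℝ × ℝ)) :=
    (memLp_two_iff_integrable_sq hKm.aestronglyMeasurable).mpr hK2
  have hh2 : Integrable (fun q => h q ^ 2) := by
    have : HasCompactSupport (fun q => h q ^ 2) := by
      exact hcs.comp_left (g := fun x : ℝ => x ^ 2) (by norm_num)
    exact ((hc.pow 2).integrable_of_hasCompactSupport this)
  have hhmem : MemLp h 2 (volume : Measure (ℝ × ℝ)) := hc.memLp_of_hasCompactSupport hcs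
  have conj : Real.HolderConjugate 2 2 := Real.HolderConjugate.two_two
  have hH := integral_mul_norm_le_Lp_mul_Lq (μ := (volume : Measure (ℝ × ℝ))) conj
    (by rw [show ENNReal.ofReal (2:ℝ) = 2 by norm_num]; exact hKmem)
    (by rw [show ENNReal.ofReal (2:ℝ) = 2 by norm_num]; exact hhmem)
  set X := ∫ q : ℝ × ℝ, ‖K q‖ ^ (2:ℝ) with hXdef
  set Y := ∫ q : ℝ × ℝ, ‖h q‖ ^ (2:ℝ) with hYdef
  have hX0 : 0 ≤ X := integral_nonneg fun q => Real.rpow_nonneg (norm_nonneg _) _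
  have hY0 : 0 ≤ Y := integral_nonneg fun q => Real.rpow_nonneg (norm_nonneg _) _
  have hnorm_sq : ∀ a : ℝ, ‖a‖ ^ (2:ℝ) = a ^ 2 := fun a => by
    rw [show (2:ℝ) = ((2:ℕ):ℝ) by norm_num, Real.rpow_natCast, Real.norm_eq_abs, sq_abs]
  have habs : |∫ q : ℝ × ℝ, K q * h q| ≤ X ^ (1/2:ℝ) * Y ^ (1/2:ℝ) := by
    calc |∫ q : ℝ × ℝ, K q * h q| ≤ ∫ q : ℝ × ℝ, ‖K q * h q‖ := by
          rw [← Real.norm_eq_abs]; exact norm_integral_le_integral_norm _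
      _ = ∫ q : ℝ × ℝ, ‖K q‖ * ‖h q‖ := by simp [norm_mul]
      _ ≤ X ^ (1/2:ℝ) * Y ^ (1/2:ℝ) := by simpa using hH
  have hsq : (∫ q : ℝ × ℝ, K q * h q) ^ 2 ≤ X * Y := by
    rw [← sq_abs]
    have h2 : |∫ q : ℝ × ℝ, K q * h q| ^ 2 ≤ (X ^ (1/2:ℝ) * Y ^ (1/2:ℝ)) ^ 2 :=
      pow_le_pow_left₀ (abs_nonneg _) habs 2
    refine h2.trans_eq ?_
    rw [mul_pow, ← Real.rpow_natCast (X ^ (1/2:ℝ)) 2, ← Real.rpow_natCast (Y ^ (1/2:ℝ)) 2,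
      ← Real.rpow_mul hX0, ← Real.rpow_mul hY0]
    norm_num
  have hXle : X ≤ ∫ q : ℝ × ℝ, (4 * R ^ 4 + 16) * ((1 + ‖q‖) ^ 4)⁻¹ := by
    have hXeq : X = ∫ q : ℝ × ℝ, K q ^ 2 := by
      rw [hXdef]; exact integral_congr_ae (Filter.Eventually.of_forall fun q => hnorm_sq _)
    rw [hXeq]
    exact integral_mono_of_nonneg (Filter.Eventually.of_forall fun q => sq_nonneg _) hWint
      (Filter.Eventually.of_forall hbd)
  have hYeq : Y = ∫ q : ℝ × ℝ, (h q) ^ 2 := by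
    rw [hYdef]; exact integral_congr_ae (Filter.Eventually.of_forall fun q => hnorm_sq _)
  calc (∫ q : ℝ × ℝ, K q * h q) ^ 2 ≤ X * Y := hsq
    _ ≤ (∫ q : ℝ × ℝ, (4 * R ^ 4 + 16) * ((1 + ‖q‖) ^ 4)⁻¹) * Y :=
        mul_le_mul_of_nonneg_right hXle hY0
    _ = _ := by rw [hYeq]

/-- Boundedness of the singular integral operator appearing in the resolvent analysis of
the two-piece two-particle Hamiltonian: there is `C > 0` such that for every smooth
compactly supported `h : ℝ² → ℝ`,
`∫₀^∞∫₀^∞ U(u+v+d) (∫_{ℝ²} sin(xu)sin(yv)/(x²+y²) · h(x,y) dx dy)² du dv ≤ C ‖h‖²_{L²}`. -/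
theorem singular_operator_bounded (U : ℝ → ℝ)
    (hU_nonneg : ∀ x, 0 ≤ U x) (hU_bdd : ∃ C : ℝ, ∀ x, U x ≤ C)
    (hU_meas : Measurable U) (hU_supp : HasCompactSupport U)
    (d : ℝ) (hd : 0 ≤ d) :
    ∃ C : ℝ, 0 < C ∧
      ∀ h : ℝ × ℝ → ℝ, ContDiff ℝ (⊤ : ℕ∞) h → HasCompactSupport h →
        (∫ u in Set.Ioi (0 : ℝ), ∫ v in Set.Ioi (0 : ℝ),
            U (u + v + d) *
              (∫ q : ℝ × ℝ,
                Real.sin (q.1 * u) * Real.sin (q.2 * v) / (q.1 ^ 2 + q.2 ^ 2) * h q) ^ 2)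
          ≤ C * ∫ q : ℝ × ℝ, (h q) ^ 2 := by
  obtain ⟨CU, hCU⟩ := hU_bdd
  have hCU0 : 0 ≤ CU := le_trans (hU_nonneg 0) (hCU 0)
  obtain ⟨r, hr⟩ := hU_supp.isCompact.isBounded.subset_closedBall 0
  set R : ℝ := max r 1 with hRdef
  have hR0 : (0:ℝ) < R := lt_of_lt_of_le one_pos (le_max_right _ _)
  have hUzero : ∀ x : ℝ, R < x → U x = 0 := by
    intro x hx
    by_contra hne
    have hmem : x ∈ tsupport U := subset_tsupport U hne
    have h1 := hr hmem
    rw [Metric.mem_closedBall, Real.dist_eq, sub_zero] at h1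
    have h2 : x ≤ r := le_trans (le_abs_self x) h1
    have : r ≤ R := le_max_left _ _
    linarith
  set Mker : ℝ := ∫ q : ℝ × ℝ, (4 * R ^ 4 + 16) * ((1 + ‖q‖) ^ 4)⁻¹ with hMdef
  have hM0 : 0 ≤ Mker := integral_nonneg fun q => by positivity
  refine ⟨CU * Mker * R ^ 2 + 1, by nlinarith [mul_nonneg (mul_nonneg hCU0 hM0) (sq_nonneg R)], ?_⟩
  intro h hsm hsupp
  have hc : Continuous h := hsm.continuous
  set Ih : ℝ := ∫ q : ℝ × ℝ, (h q) ^ 2 with hIhdef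
  have hIh0 : 0 ≤ Ih := integral_nonneg fun q => sq_nonneg _
  set P : ℝ := CU * (Mker * Ih) with hPdef
  have hP0 : 0 ≤ P := mul_nonneg hCU0 (mul_nonneg hM0 hIh0)
  set g : ℝ → ℝ → ℝ := fun u v =>
    ∫ q : ℝ × ℝ, Real.sin (q.1 * u) * Real.sin (q.2 * v) / (q.1 ^ 2 + q.2 ^ 2) * h q with hgdef
  -- integrable indicator
  have hindP : ∀ c : ℝ, Integrable ((Set.Ioc (0:ℝ) R).indicator fun _ => c) := by
    intro c
    rw [integrable_indicator_iff measurableSet_Ioc]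
    exact integrableOn_const (by rw [Real.volume_Ioc]; exact ENNReal.ofReal_ne_top)
  have hind_int : ∀ c : ℝ,
      (∫ w in Set.Ioi (0:ℝ), (Set.Ioc (0:ℝ) R).indicator (fun _ => c) w) = R * c := by
    intro c
    rw [setIntegral_indicator measurableSet_Ioc,
      show Set.Ioi (0:ℝ) ∩ Set.Ioc 0 R = Set.Ioc 0 R from
        Set.inter_eq_self_of_subset_right (fun x hx => hx.1),
      setIntegral_const, Real.volume_real_Ioc_of_le hR0.le, smul_eq_mul]
    ring
  -- inner bound
  have inner_bd : ∀ u ∈ Set.Ioi (0:ℝ),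
      (∫ v in Set.Ioi (0:ℝ), U (u + v + d) * (g u v) ^ 2)
        ≤ (Set.Ioc (0:ℝ) R).indicator (fun _ => R * P) u := by
    intro u hu
    rw [Set.mem_Ioi] at hu
    rcases le_or_gt u R with huR | huR
    · have hle : (∫ v in Set.Ioi (0:ℝ), U (u + v + d) * (g u v) ^ 2)
          ≤ ∫ v in Set.Ioi (0:ℝ), (Set.Ioc (0:ℝ) R).indicator (fun _ => P) v := by
        refine integral_mono_of_nonneg
          (Filter.Eventually.of_forall fun v => mul_nonneg (hU_nonneg _) (sq_nonneg _))
          ((hindP P).restrict) ?_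
        filter_upwards [ae_restrict_mem measurableSet_Ioi] with v hv
        rw [Set.mem_Ioi] at hv
        rcases le_or_gt v R with hvR | hvR
        · rw [Set.indicator_of_mem (Set.mem_Ioc.mpr ⟨hv, hvR⟩)]
          exact mul_le_mul (hCU _) (cs_step ⟨hu, huR⟩ ⟨hv, hvR⟩ hc hsupp) (sq_nonneg _) hCU0
        · rw [Set.indicator_of_notMem (fun hmem => absurd hmem.2 (not_le.mpr hvR)),
            hUzero _ (by linarith), zero_mul]
      rw [hind_int P] at hle
      rwa [Set.indicator_of_mem (Set.mem_Ioc.mpr ⟨hu, huR⟩)]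
    · have hz : (∫ v in Set.Ioi (0:ℝ), U (u + v + d) * (g u v) ^ 2) = 0 := by
        have heq : Set.EqOn (fun v => U (u + v + d) * (g u v) ^ 2) (fun _ => (0:ℝ))
            (Set.Ioi (0:ℝ)) := by
          intro v hv
          rw [Set.mem_Ioi] at hv
          simp only
          rw [hUzero _ (by linarith), zero_mul]
        rw [setIntegral_congr_fun measurableSet_Ioi heq, integral_zero]
      rw [hz, Set.indicator_of_notMem (fun hmem => absurd hmem.2 (not_le.mpr huR))]
  -- outer bound
  have houter : (∫ u in Set.Ioi (0:ℝ), ∫ v in Set.Ioi (0:ℝ), U (u + v + d) * (g u v) ^ 2)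
      ≤ ∫ u in Set.Ioi (0:ℝ), (Set.Ioc (0:ℝ) R).indicator (fun _ => R * P) u := by
    refine integral_mono_of_nonneg
      (Filter.Eventually.of_forall fun u =>
        integral_nonneg fun v => mul_nonneg (hU_nonneg _) (sq_nonneg _))
      ((hindP (R * P)).restrict) ?_
    filter_upwards [ae_restrict_mem measurableSet_Ioi] with u hu
    exact inner_bd u hu
  rw [hind_int (R * P)] at houter
  refine houter.trans ?_
  have : R * (R * P) = CU * Mker * R ^ 2 * Ih := by rw [hPdef]; ring
  rw [this]
  nlinarith [mul_nonneg (mul_nonneg hCU0 hM0) (sq_nonneg R)]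
end

section
/- Let U : ℝ → ℝ be nonnegative, bounded, measurable and compactly supported, let d ≥ 0 and a ≥ 1, and let Ω = {(u,v) ∈ ℝ² : u > v > 0}. For l > 0 define g_l : Ω → ℝ by g_l(u,v) = 2·l²·√(U(u + d))·sin(π(u − v)/l)·sin(πv/(al)) if 0 < (u − v)/l < 1 and 0 < v/(al) < 1, and g_l(u,v) = 0 otherwise. Then g_l converges in L²(Ω), as l → ∞, to the function (u,v) ↦ (2π²/a)·√(U(u + d))·(u − v)·v. -/
open MeasureTheory Filter Real Topology
open scoped ENNReal NNReal

private lemma tendsto_self_mul_sin (c : ℝ) (hc : c ≠ 0) :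
    Tendsto (fun l : ℝ => l * Real.sin (c / l)) atTop (𝓝 c) := by
  have hslope : Tendsto (fun x : ℝ => Real.sin x / x) (𝓝[≠] (0:ℝ)) (𝓝 1) := by
    have h := (Real.hasDerivAt_sin 0)
    rw [hasDerivAt_iff_tendsto_slope] at h
    rw [Real.cos_zero] at h
    refine h.congr fun x => ?_
    simp [slope_def_field]
  have h1 : Tendsto (fun l : ℝ => c / l) atTop (𝓝[≠] (0:ℝ)) := by
    rw [tendsto_nhdsWithin_iff]
    refine ⟨Tendsto.const_div_atTop tendsto_id c, ?_⟩
    filter_upwards [eventually_gt_atTop (0:ℝ)] with l hl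
    exact div_ne_zero hc (ne_of_gt hl)
  have h2 := hslope.comp h1
  have h3 := h2.const_mul c
  rw [mul_one] at h3
  refine h3.congr' ?_
  filter_upwards [eventually_gt_atTop (0:ℝ)] with l hl
  show c * (Real.sin (c / l) / (c / l)) = l * Real.sin (c / l)
  field_simp

private noncomputable def Faux (U : ℝ → ℝ) (d a l : ℝ) (p : ℝ × ℝ) : ℝ :=
  if 0 < (p.1 - p.2) / l ∧ (p.1 - p.2) / l < 1 ∧
      0 < p.2 / (a * l) ∧ p.2 / (a * l) < 1 then
    2 * l ^ 2 * Real.sqrt (U (p.1 + d)) *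
      Real.sin (π * (p.1 - p.2) / l) * Real.sin (π * p.2 / (a * l))
  else 0

private noncomputable def faux (U : ℝ → ℝ) (d a : ℝ) (p : ℝ × ℝ) : ℝ :=
  (2 * π ^ 2 / a) * Real.sqrt (U (p.1 + d)) * (p.1 - p.2) * p.2

private lemma Faux_abs_le (U : ℝ → ℝ) (d a : ℝ) (ha0 : 0 < a) (l : ℝ) (p : ℝ × ℝ)
    (h1 : p.2 < p.1) (h2 : 0 < p.2) :
    |Faux U d a l p| ≤ (2 * π ^ 2 / a) * Real.sqrt (U (p.1 + d)) * (p.1 - p.2) * p.2 := by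
  have hA : 0 < p.1 - p.2 := sub_pos.2 h1
  unfold Faux
  by_cases hcond : 0 < (p.1 - p.2) / l ∧ (p.1 - p.2) / l < 1 ∧
      0 < p.2 / (a * l) ∧ p.2 / (a * l) < 1
  · rw [if_pos hcond]
    obtain ⟨hc1, hc2, hc3, hc4⟩ := hcond
    have hl : 0 < l := by
      rcases div_pos_iff.1 hc1 with ⟨_, h⟩ | ⟨h, _⟩
      · exact h
      · linarith
    have hs1 : |Real.sin (π * (p.1 - p.2) / l)| ≤ π * (p.1 - p.2) / l :=
      Real.abs_sin_le_abs.trans_eq (abs_of_pos (div_pos (mul_pos Real.pi_pos hA) hl))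
    have hs2 : |Real.sin (π * p.2 / (a * l))| ≤ π * p.2 / (a * l) :=
      Real.abs_sin_le_abs.trans_eq
        (abs_of_pos (div_pos (mul_pos Real.pi_pos h2) (mul_pos ha0 hl)))
    have hcoef : 0 ≤ 2 * l ^ 2 * Real.sqrt (U (p.1 + d)) := by positivity
    calc |2 * l ^ 2 * Real.sqrt (U (p.1 + d)) * Real.sin (π * (p.1 - p.2) / l) *
            Real.sin (π * p.2 / (a * l))|
        = 2 * l ^ 2 * Real.sqrt (U (p.1 + d)) * |Real.sin (π * (p.1 - p.2) / l)| *
            |Real.sin (π * p.2 / (a * l))| := by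
          rw [abs_mul, abs_mul, abs_of_nonneg hcoef]
      _ ≤ 2 * l ^ 2 * Real.sqrt (U (p.1 + d)) * (π * (p.1 - p.2) / l) *
            (π * p.2 / (a * l)) := by
          refine mul_le_mul (mul_le_mul_of_nonneg_left hs1 hcoef) hs2 (abs_nonneg _) ?_
          exact mul_nonneg hcoef (le_of_lt (div_pos (mul_pos Real.pi_pos hA) hl))
      _ = (2 * π ^ 2 / a) * Real.sqrt (U (p.1 + d)) * (p.1 - p.2) * p.2 := by
          field_simp
  · rw [if_neg hcond, abs_zero]
    have hc0 : (0:ℝ) < 2 * π ^ 2 / a := div_pos (by positivity) ha0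
    exact mul_nonneg (mul_nonneg (mul_nonneg hc0.le (Real.sqrt_nonneg _)) hA.le) h2.le

private lemma Faux_tendsto (U : ℝ → ℝ) (d a : ℝ) (ha0 : 0 < a) (p : ℝ × ℝ)
    (h1 : p.2 < p.1) (h2 : 0 < p.2) :
    Tendsto (fun l : ℝ => Faux U d a l p) atTop (𝓝 (faux U d a p)) := by
  have hA : 0 < p.1 - p.2 := sub_pos.2 h1
  have hc1 : π * (p.1 - p.2) ≠ 0 := ne_of_gt (mul_pos Real.pi_pos hA)
  have hc2 : π * p.2 / a ≠ 0 := ne_of_gt (div_pos (mul_pos Real.pi_pos h2) ha0)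
  have h1' := tendsto_self_mul_sin _ hc1
  have h2' := tendsto_self_mul_sin _ hc2
  have h3 := (h1'.mul h2').const_mul (2 * Real.sqrt (U (p.1 + d)))
  have hval : 2 * Real.sqrt (U (p.1 + d)) * (π * (p.1 - p.2) * (π * p.2 / a))
      = faux U d a p := by
    unfold faux
    field_simp
  rw [hval] at h3
  refine h3.congr' ?_
  filter_upwards [eventually_gt_atTop (max (p.1 - p.2) (p.2 / a)),
    eventually_gt_atTop (0:ℝ)] with l hl hl0
  have hltA : p.1 - p.2 < l := (le_max_left _ _).trans_lt hl
  have hltB : p.2 / a < l := (le_max_right _ _).trans_lt hl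
  have hcond : 0 < (p.1 - p.2) / l ∧ (p.1 - p.2) / l < 1 ∧
      0 < p.2 / (a * l) ∧ p.2 / (a * l) < 1 := by
    refine ⟨div_pos hA hl0, (div_lt_one hl0).2 hltA,
      div_pos h2 (mul_pos ha0 hl0), (div_lt_one (mul_pos ha0 hl0)).2 ?_⟩
    have := (div_lt_iff₀ ha0).1 hltB
    calc p.2 < l * a := this
      _ = a * l := mul_comm _ _
  show 2 * Real.sqrt (U (p.1 + d)) *
      (l * Real.sin (π * (p.1 - p.2) / l) * (l * Real.sin (π * p.2 / a / l)))
      = Faux U d a l p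
  unfold Faux
  rw [if_pos hcond, div_div]
  ring

private lemma Faux_measurable (U : ℝ → ℝ) (hU_meas : Measurable U) (d a l : ℝ) :
    Measurable (Faux U d a l) := by
  unfold Faux
  have hsq : Measurable fun p : ℝ × ℝ => Real.sqrt (U (p.1 + d)) :=
    Real.continuous_sqrt.measurable.comp (hU_meas.comp (measurable_fst.add_const d))
  have hsin1 : Measurable fun p : ℝ × ℝ => Real.sin (π * (p.1 - p.2) / l) :=
    Real.continuous_sin.measurable.comp
      (((measurable_fst.sub measurable_snd).const_mul π).div_const l)
  have hsin2 : Measurable fun p : ℝ × ℝ => Real.sin (π * p.2 / (a * l)) :=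
    Real.continuous_sin.measurable.comp ((measurable_snd.const_mul π).div_const (a * l))
  refine Measurable.ite ?_ (((measurable_const.mul hsq).mul hsin1).mul hsin2)
    measurable_const
  simp only [Set.setOf_and]
  refine MeasurableSet.inter ?_ (MeasurableSet.inter ?_ (MeasurableSet.inter ?_ ?_))
  · exact measurableSet_lt measurable_const ((measurable_fst.sub measurable_snd).div_const l)
  · exact measurableSet_lt ((measurable_fst.sub measurable_snd).div_const l) measurable_const
  · exact measurableSet_lt measurable_const (measurable_snd.div_const (a * l))
  · exact measurableSet_lt (measurable_snd.div_const (a * l)) measurable_const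

private lemma faux_measurable (U : ℝ → ℝ) (hU_meas : Measurable U) (d a : ℝ) :
    Measurable (faux U d a) := by
  unfold faux
  have hsq : Measurable fun p : ℝ × ℝ => Real.sqrt (U (p.1 + d)) :=
    Real.continuous_sqrt.measurable.comp (hU_meas.comp (measurable_fst.add_const d))
  exact ((measurable_const.mul hsq).mul (measurable_fst.sub measurable_snd)).mul
    measurable_snd

/-- The rescaled, potential-weighted two-piece ground state functions
`g_l(u,v) = 2l²√(U(u+d))·sin(π(u−v)/l)·sin(πv/(al))` (extended by `0` outside the
rescaled box) converge in `L²(Ω)`, `Ω = {u > v > 0}`, to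
`(u,v) ↦ (2π²/a)·√(U(u+d))·(u−v)·v` as `l → ∞`. -/
theorem rescaled_ground_state_L2_limit (U : ℝ → ℝ)
    (hU_nonneg : ∀ x, 0 ≤ U x) (hU_bdd : ∃ C : ℝ, ∀ x, U x ≤ C)
    (hU_meas : Measurable U) (hU_supp : HasCompactSupport U)
    (d : ℝ) (hd : 0 ≤ d) (a : ℝ) (ha : 1 ≤ a) :
    Tendsto
      (fun l : ℝ =>
        eLpNorm
          (fun p : ℝ × ℝ =>
            (if 0 < (p.1 - p.2) / l ∧ (p.1 - p.2) / l < 1 ∧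
                0 < p.2 / (a * l) ∧ p.2 / (a * l) < 1 then
              2 * l ^ 2 * Real.sqrt (U (p.1 + d)) *
                Real.sin (π * (p.1 - p.2) / l) * Real.sin (π * p.2 / (a * l))
            else 0) -
            (2 * π ^ 2 / a) * Real.sqrt (U (p.1 + d)) * (p.1 - p.2) * p.2)
          2 (volume.restrict {p : ℝ × ℝ | p.2 < p.1 ∧ 0 < p.2}))
      atTop (nhds 0) := by
  show Tendsto
      (fun l : ℝ => eLpNorm (fun p : ℝ × ℝ => Faux U d a l p - faux U d a p) 2
        (volume.restrict {p : ℝ × ℝ | p.2 < p.1 ∧ 0 < p.2}))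
      atTop (𝓝 0)
  obtain ⟨C₀, hC₀⟩ := hU_bdd
  set C : ℝ := max C₀ 0 with hCdef
  have hC : ∀ x, U x ≤ C := fun x => le_trans (hC₀ x) (le_max_left _ _)
  have hC0 : (0:ℝ) ≤ C := le_max_right _ _
  have ha0 : (0:ℝ) < a := lt_of_lt_of_le one_pos ha
  obtain ⟨r, hr⟩ := hU_supp.isBounded.subset_closedBall 0
  set R : ℝ := max r 0 with hRdef
  have hR0 : (0:ℝ) ≤ R := le_max_right _ _
  have hrR : ∀ x ∈ tsupport U, |x| ≤ R := by
    intro x hx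
    have h := hr hx
    rw [Metric.mem_closedBall, Real.dist_eq, sub_zero] at h
    exact h.trans (le_max_left _ _)
  set Ω : Set (ℝ × ℝ) := {p : ℝ × ℝ | p.2 < p.1 ∧ 0 < p.2} with hΩdef
  have hΩ : MeasurableSet Ω :=
    (measurableSet_lt measurable_snd measurable_fst).inter
      (measurableSet_lt measurable_const measurable_snd)
  set μ := volume.restrict Ω with hμdef
  set S : Set (ℝ × ℝ) := {p : ℝ × ℝ | p.1 + d ∈ tsupport U} with hSdef
  have hS : MeasurableSet S :=
    (measurable_fst.add_const d) (isClosed_tsupport U).measurableSet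
  set M : ℝ := (2 * π ^ 2 / a) * Real.sqrt C * R * R with hMdef
  have hc0 : (0:ℝ) < 2 * π ^ 2 / a := div_pos (by positivity) ha0
  have hM0 : 0 ≤ M := by
    have h1 : 0 ≤ (2 * π ^ 2 / a) * Real.sqrt C := mul_nonneg hc0.le (Real.sqrt_nonneg _)
    exact mul_nonneg (mul_nonneg h1 hR0) hR0
  set bound : ℝ × ℝ → ℝ≥0∞ :=
    S.indicator fun _ => ENNReal.ofReal (2 * M) ^ (2:ℝ) with hbdef
  have hSsub : S ∩ Ω ⊆ Set.Icc (0:ℝ) R ×ˢ Set.Icc (0:ℝ) R := by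
    rintro p ⟨hpS, hp1, hp2⟩
    have h := abs_le.1 (hrR _ hpS)
    exact ⟨⟨by linarith, by linarith⟩, ⟨by linarith, by linarith⟩⟩
  have hμS : μ S ≠ ∞ := by
    rw [hμdef, Measure.restrict_apply hS]
    exact ne_of_lt (lt_of_le_of_lt (measure_mono hSsub)
      (isCompact_Icc.prod isCompact_Icc).measure_lt_top)
  have hfin : ∫⁻ p, bound p ∂μ ≠ ∞ := by
    rw [hbdef, lintegral_indicator hS, setLIntegral_const]
    exact ENNReal.mul_ne_top
      (ENNReal.rpow_ne_top_of_nonneg (by norm_num) ENNReal.ofReal_ne_top) hμS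
  have hbound : ∀ l : ℝ, ∀ᵐ p ∂μ,
      (‖Faux U d a l p - faux U d a p‖₊ : ℝ≥0∞) ^ (2:ℝ) ≤ bound p := by
    intro l
    filter_upwards [ae_restrict_mem hΩ] with p hp
    obtain ⟨hp1, hp2⟩ := hp
    by_cases hpS : p ∈ S
    · rw [hbdef, Set.indicator_of_mem hpS]
      have habs := Faux_abs_le U d a ha0 l p hp1 hp2
      have hu : p.1 ≤ R := by
        have h := abs_le.1 (hrR _ hpS)
        linarith
      have hAle : p.1 - p.2 ≤ R := by linarith
      have hBle : p.2 ≤ R := by linarith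
      have hsle : Real.sqrt (U (p.1 + d)) ≤ Real.sqrt C := Real.sqrt_le_sqrt (hC _)
      have hM1 : (2 * π ^ 2 / a) * Real.sqrt (U (p.1 + d)) * (p.1 - p.2) * p.2 ≤ M := by
        have n1 : 0 ≤ (2 * π ^ 2 / a) * Real.sqrt C :=
          mul_nonneg hc0.le (Real.sqrt_nonneg _)
        have step1 : (2 * π ^ 2 / a) * Real.sqrt (U (p.1 + d)) ≤
            (2 * π ^ 2 / a) * Real.sqrt C := mul_le_mul_of_nonneg_left hsle hc0.le
        have step2 : (2 * π ^ 2 / a) * Real.sqrt (U (p.1 + d)) * (p.1 - p.2) ≤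
            (2 * π ^ 2 / a) * Real.sqrt C * R :=
          mul_le_mul step1 hAle (by linarith) n1
        exact mul_le_mul step2 hBle hp2.le (mul_nonneg n1 hR0)
      have hfnn : 0 ≤ faux U d a p := by
        unfold faux
        exact mul_nonneg (mul_nonneg (mul_nonneg hc0.le (Real.sqrt_nonneg _))
          (by linarith)) hp2.le
      have hfabs : |faux U d a p| ≤ M := by
        rw [abs_of_nonneg hfnn]
        exact le_trans (le_of_eq rfl) hM1
      have habs2 : |Faux U d a l p - faux U d a p| ≤ 2 * M := by
        calc |Faux U d a l p - faux U d a p|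
            ≤ |Faux U d a l p| + |faux U d a p| := abs_sub _ _
          _ ≤ M + M := add_le_add (habs.trans hM1) hfabs
          _ = 2 * M := by ring
      refine ENNReal.rpow_le_rpow ?_ (by norm_num)
      rw [← enorm_eq_nnnorm, ← ofReal_norm]
      exact ENNReal.ofReal_le_ofReal (by rwa [Real.norm_eq_abs])
    · rw [hbdef, Set.indicator_of_notMem hpS]
      have hU0 : U (p.1 + d) = 0 := image_eq_zero_of_notMem_tsupport hpS
      have hz : Faux U d a l p - faux U d a p = 0 := by
        unfold Faux faux
        rw [hU0, Real.sqrt_zero]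
        simp
      rw [hz, nnnorm_zero, ENNReal.coe_zero,
        ENNReal.zero_rpow_of_pos (by norm_num : (0:ℝ) < 2)]
  have hlim : ∀ᵐ p ∂μ, Tendsto
      (fun l : ℝ => (‖Faux U d a l p - faux U d a p‖₊ : ℝ≥0∞) ^ (2:ℝ))
      atTop (𝓝 0) := by
    filter_upwards [ae_restrict_mem hΩ] with p hp
    obtain ⟨hp1, hp2⟩ := hp
    have h0 : Tendsto (fun l : ℝ => Faux U d a l p - faux U d a p) atTop (𝓝 0) := by
      have h := (Faux_tendsto U d a ha0 p hp1 hp2).sub_const (faux U d a p)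
      rwa [sub_self] at h
    have h1 : Tendsto (fun l : ℝ => (‖Faux U d a l p - faux U d a p‖₊ : ℝ≥0∞))
        atTop (𝓝 0) := by
      simpa using ENNReal.tendsto_coe.2 h0.nnnorm
    have h2 := ((ENNReal.continuous_rpow_const (y := (2:ℝ))).tendsto (0:ℝ≥0∞)).comp h1
    rw [ENNReal.zero_rpow_of_pos (by norm_num : (0:ℝ) < 2)] at h2
    exact h2
  have hGmeas : ∀ l : ℝ, Measurable
      fun p : ℝ × ℝ => (‖Faux U d a l p - faux U d a p‖₊ : ℝ≥0∞) ^ (2:ℝ) := by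
    intro l
    have h := ((Faux_measurable U hU_meas d a l).sub (faux_measurable U hU_meas d a)).enorm
    exact (ENNReal.continuous_rpow_const (y := (2:ℝ))).measurable.comp h
  have key := tendsto_lintegral_filter_of_dominated_convergence (μ := μ)
    (f := fun _ => (0:ℝ≥0∞)) bound (Eventually.of_forall hGmeas)
    (Eventually.of_forall hbound) hfin hlim
  rw [lintegral_zero] at key
  have key2 := ((ENNReal.continuous_rpow_const (y := (1/2:ℝ))).tendsto (0:ℝ≥0∞)).comp key
  rw [ENNReal.zero_rpow_of_pos (by norm_num : (0:ℝ) < 1/2)] at key2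
  refine key2.congr fun l => ?_
  show (∫⁻ p, (‖Faux U d a l p - faux U d a p‖₊ : ℝ≥0∞) ^ (2:ℝ) ∂μ) ^ (1/2:ℝ)
      = eLpNorm (fun p : ℝ × ℝ => Faux U d a l p - faux U d a p) 2 μ
  rw [eLpNorm_eq_lintegral_rpow_enorm_toReal two_ne_zero ENNReal.ofNat_ne_top]
  norm_num
  rfl
end
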